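/- arXiv:1110.1699 — 2 statements merged into one kernel-verified Lean document; each statement's English description precedes it below -/
import Mathlib

section
/- Let A be a finite dimensional positively graded algebra over a field such that A_0 is semisimple and A is generated by A_0 and A_1. If M is a finite dimensional graded A-module whose head M/rad M is irreducible, then the radical filtration of M coincides (up to shift) with the grading filtration Gr_d M = ⊕_{k ≥ d} M_k. Dually, if soc M is irreducible, the socle filtration coincides with the grading filtration. Consequently, M is rigid (radical and socle filtrations coincide) whenever both soc M and M/rad M are irreducible. -/
/-- The radical of a module: the intersection of its maximal submodules. -/
noncomputable def radM (A M : Type) [Ring A] [AddCommGroup M] [Module A M] :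
    Submodule A M :=
  sInf {N : Submodule A M | IsCoatom N}

/-- The socle of a module: the sum of its simple submodules. -/
noncomputable def socM (A M : Type) [Ring A] [AddCommGroup M] [Module A M] :
    Submodule A M :=
  sSup {N : Submodule A M | IsAtom N}

/-- The radical filtration `M ⊇ rad M ⊇ rad² M ⊇ ⋯`. -/
noncomputable def radFilt (A M : Type) [Ring A] [AddCommGroup M] [Module A M] :
    ℕ → Submodule A M
  | 0 => ⊤
  | n + 1 => (radM A ↥(radFilt A M n)).map (radFilt A M n).subtype

/-- The socle filtration `0 ⊆ soc M ⊆ soc² M ⊆ ⋯`, where `soc^{i+1} M` is the preimage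
of `soc (M ⧸ soc^i M)`. -/
noncomputable def socFilt (A M : Type) [Ring A] [AddCommGroup M] [Module A M] :
    ℕ → Submodule A M
  | 0 => ⊥
  | n + 1 => (socM A (M ⧸ socFilt A M n)).comap (socFilt A M n).mkQ

/-!
Let `J = A_{≥1}`. It is a two-sided ideal, nilpotent because `A` is finite dimensional, and
`A ⧸ J ≅ A_0` is semisimple; hence `rad W = J W` and `soc W = {x | J x = 0}` for every
`A`-module `W`. Since `A` is generated in degrees `0` and `1`, `A_{≥r+1} = J A_{≥r} = A_{≥r} J`,
so `rad^r M = A_{≥r} M` and `soc^r M = {x | A_{≥r} x = 0}`.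

If the head of `M` is simple, then `rad M = M_{≥s+1}` for the lowest degree `s`, so `M` is
generated by `M_s` and `A_{≥r} M = M_{≥s+r}`. If the socle is simple, it contains the top piece
`M_t` and lies in every nonzero submodule; so a nonzero homogeneous `x ∈ M_k` with `k + r ≤ t`
has `0 ≠ A_{t-k} x ⊆ A_{≥r} x`, whence `soc^r M = M_{≥t+1-r}`. Comparing the two descriptions
gives `rad^r M = soc^{t-s+1-r} M`.
-/

open Submodule Pointwise

theorem iSupIndep.inf_iSup_eq_of_le {α ι : Type*} [CompleteLattice α] [IsModularLattice α]
    {f g : ι → α} (hg : iSupIndep g) (hfg : f ≤ g) (i : ι) : g i ⊓ ⨆ j, f j = f i := by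
  have hdisj : Disjoint (⨆ (j) (_ : j ≠ i), f j) (g i) :=
    (hg i).symm.mono_left (iSup₂_mono fun j _ => hfg j)
  rw [iSup_split_single f i, inf_comm, sup_inf_assoc_of_le _ (hfg i), hdisj.eq_bot, sup_bot_eq]

theorem Submodule.map_set_smul {A W W' : Type*} [Ring A] [AddCommGroup W] [Module A W]
    [AddCommGroup W'] [Module A W'] (f : W →ₗ[A] W') (s : Set A) (N : Submodule A W) :
    (s • N).map f = s • N.map f := by
  refine le_antisymm (map_le_iff_le_comap.mpr <| set_smul_le _ _ _ fun a x ha hx => ?_)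
    (set_smul_le _ _ _ ?_)
  · rw [mem_comap, map_smul]
    exact mem_set_smul_of_mem_mem ha (mem_map_of_mem hx)
  · rintro a _ ha ⟨x, hx, rfl⟩
    rw [← map_smul]
    exact mem_map_of_mem (mem_set_smul_of_mem_mem ha hx)

theorem isSemisimpleModule_of_forall_exists_smul_eq {R A W : Type*} [CommRing R] [Ring A]
    [Algebra R A] [AddCommGroup W] [Module A W] (B : Subalgebra R A) [IsSemisimpleRing B]
    (h : ∀ a : A, ∃ b ∈ B, ∀ x : W, a • x = b • x) : IsSemisimpleModule A W := by
  let e := restrictScalarsEmbedding B A W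
  have he : Function.Surjective e := fun P =>
    ⟨{ P with
        smul_mem' := fun a x hx => by
          obtain ⟨b, hb, hab⟩ := h a
          rw [hab x]
          exact P.smul_mem ⟨b, hb⟩ hx }, rfl⟩
  rw [isSemisimpleModule_iff, (OrderIso.ofSurjective e he).complementedLattice_iff]
  exact IsSemisimpleModule.toComplementedLattice

section GradingFiltration

variable {K V : Type*} [Semiring K] [AddCommMonoid V] [Module K V]

def gradingFiltration (𝒱 : ℤ → Submodule K V) (t : ℤ) : Submodule K V :=
  ⨆ (k : ℤ) (_ : t ≤ k), 𝒱 k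

variable {𝒱 : ℤ → Submodule K V}

theorem le_gradingFiltration {t k : ℤ} (h : t ≤ k) : 𝒱 k ≤ gradingFiltration 𝒱 t :=
  le_iSup₂ (f := fun k (_ : t ≤ k) => 𝒱 k) k h

theorem gradingFiltration_le_iff {t : ℤ} {N : Submodule K V} :
    gradingFiltration 𝒱 t ≤ N ↔ ∀ k, t ≤ k → 𝒱 k ≤ N :=
  iSup₂_le_iff

theorem gradingFiltration_antitone : Antitone (gradingFiltration 𝒱) := fun _ _ h =>
  gradingFiltration_le_iff.mpr fun _ hk => le_gradingFiltration (h.trans hk)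

@[elab_as_elim]
theorem gradingFiltration_induction {t : ℤ} {motive : V → Prop} {x : V}
    (hx : x ∈ gradingFiltration 𝒱 t) (mem : ∀ k, t ≤ k → ∀ y ∈ 𝒱 k, motive y)
    (zero : motive 0) (add : ∀ y z, motive y → motive z → motive (y + z)) : motive x := by
  rw [gradingFiltration, iSup_subtype'] at hx
  exact iSup_induction _ (motive := motive) hx (fun k y hy => mem k.1 k.2 y hy) zero add

theorem gradingFiltration_eq_bot_iff {t : ℤ} :
    gradingFiltration 𝒱 t = ⊥ ↔ ∀ k, t ≤ k → 𝒱 k = ⊥ := by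
  simp only [← le_bot_iff, gradingFiltration_le_iff]

theorem gradingFiltration_eq_bot_iff_lt {t u : ℤ} (ht : 𝒱 t ≠ ⊥)
    (hgt : ∀ k, t < k → 𝒱 k = ⊥) : gradingFiltration 𝒱 u = ⊥ ↔ t < u := by
  rw [gradingFiltration_eq_bot_iff]
  exact ⟨fun h => lt_of_not_ge fun hu => ht (h t hu), fun h k hk => hgt k (by omega)⟩

theorem gradingFiltration_eq_top (htop : ⨆ k, 𝒱 k = ⊤) {s : ℤ} (hlt : ∀ k < s, 𝒱 k = ⊥) :
    gradingFiltration 𝒱 s = ⊤ := by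
  refine eq_top_iff.mpr (htop ▸ iSup_le fun k => ?_)
  rcases lt_or_ge k s with h | h
  · simp [hlt k h]
  · exact le_gradingFiltration h

theorem gradingFiltration_eq_sup (t : ℤ) :
    gradingFiltration 𝒱 t = 𝒱 t ⊔ gradingFiltration 𝒱 (t + 1) := by
  refine le_antisymm (gradingFiltration_le_iff.mpr fun k hk => ?_)
    (sup_le (le_gradingFiltration le_rfl) (gradingFiltration_antitone (by omega)))
  rcases hk.eq_or_lt with rfl | h
  · exact le_sup_left
  · exact le_sup_of_le_right (le_gradingFiltration (by omega))

theorem iSupIndep.disjoint_gradingFiltration (h : iSupIndep 𝒱) (t : ℤ) :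
    Disjoint (𝒱 t) (gradingFiltration 𝒱 (t + 1)) :=
  (h t).mono_right <| gradingFiltration_le_iff.mpr fun k hk =>
    le_iSup₂ (f := fun j (_ : j ≠ t) => 𝒱 j) k (by omega)

end GradingFiltration

section FiniteSupport

variable {K V : Type*} [Field K] [AddCommGroup V] [Module K V] {𝒱 : ℤ → Submodule K V}

theorem iSupIndep.finite_setOf_ne_bot [FiniteDimensional K V] (h : iSupIndep 𝒱) :
    {k | 𝒱 k ≠ ⊥}.Finite :=
  have := h.fintypeNeBotOfFiniteDimensional
  Set.finite_coe_iff.mp (Finite.of_fintype {k // 𝒱 k ≠ ⊥})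

theorem exists_gradingFiltration_eq_bot [FiniteDimensional K V] (h : iSupIndep 𝒱) :
    ∃ n : ℕ, gradingFiltration 𝒱 n = ⊥ := by
  obtain ⟨b, hb⟩ := h.finite_setOf_ne_bot.bddAbove
  refine ⟨(b + 1).toNat, gradingFiltration_eq_bot_iff.mpr fun k hk => ?_⟩
  by_contra hk'
  have := hb hk'
  omega

theorem DirectSum.IsInternal.nonempty_setOf_ne_bot [Nontrivial V]
    (h : DirectSum.IsInternal 𝒱) : {k | 𝒱 k ≠ ⊥}.Nonempty := by
  by_contra hempty
  have hbot : ∀ k, 𝒱 k = ⊥ := fun k => not_not.mp fun hk => hempty ⟨k, hk⟩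
  exact bot_ne_top ((iSup_eq_bot.mpr hbot).symm.trans h.submodule_iSup_eq_top)

theorem exists_lowest_grade [FiniteDimensional K V] [Nontrivial V]
    (h : DirectSum.IsInternal 𝒱) : ∃ s, 𝒱 s ≠ ⊥ ∧ ∀ k < s, 𝒱 k = ⊥ := by
  obtain ⟨s, hs, hmin⟩ := Set.exists_min_image _ id h.submodule_iSupIndep.finite_setOf_ne_bot
    h.nonempty_setOf_ne_bot
  exact ⟨s, hs, fun k hk => by_contra fun hk' => (hmin k hk').not_gt hk⟩

theorem exists_highest_grade [FiniteDimensional K V] [Nontrivial V]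
    (h : DirectSum.IsInternal 𝒱) : ∃ t, 𝒱 t ≠ ⊥ ∧ ∀ k, t < k → 𝒱 k = ⊥ := by
  obtain ⟨t, ht, hmax⟩ := Set.exists_max_image _ id h.submodule_iSupIndep.finite_setOf_ne_bot
    h.nonempty_setOf_ne_bot
  exact ⟨t, ht, fun k hk => by_contra fun hk' => (hmax k hk').not_gt hk⟩

end FiniteSupport

section GradedAlgebra

variable {K A : Type*} [CommRing K] [Ring A] [Algebra K A] {𝒜 : ℤ → Submodule K A}

theorem smul_mem_gradingFiltration {M : Type*} [AddCommGroup M] [Module K M] [Module A M]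
    {ℳ : ℤ → Submodule K M} [SetLike.GradedSMul 𝒜 ℳ] {i j : ℤ} {a : A} {x : M}
    (ha : a ∈ gradingFiltration 𝒜 i) (hx : x ∈ gradingFiltration ℳ j) :
    a • x ∈ gradingFiltration ℳ (i + j) := by
  refine gradingFiltration_induction ha (fun d hd b hb => ?_) (by simp)
    fun b c hb hc => by rw [add_smul]; exact add_mem hb hc
  refine gradingFiltration_induction hx (fun k hk y hy => ?_) (by simp)
    fun y z hy hz => by rw [smul_add]; exact add_mem hy hz
  exact le_gradingFiltration (k := d + k) (by omega) (SetLike.GradedSMul.smul_mem hb hy)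

theorem exists_sub_mem_gradingFiltration_one (h0 : gradingFiltration 𝒜 0 = ⊤) (a : A) :
    ∃ b ∈ 𝒜 0, a - b ∈ gradingFiltration 𝒜 1 := by
  have ha : a ∈ 𝒜 0 ⊔ gradingFiltration 𝒜 (0 + 1) :=
    gradingFiltration_eq_sup (𝒱 := 𝒜) 0 ▸ h0 ▸ mem_top
  obtain ⟨b, hb, c, hc, rfl⟩ := mem_sup.mp ha
  exact ⟨b, hb, by simpa using hc⟩

variable [SetLike.GradedMonoid 𝒜]

theorem mul_mem_gradingFiltration {i j : ℤ} {a b : A} (ha : a ∈ gradingFiltration 𝒜 i)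
    (hb : b ∈ gradingFiltration 𝒜 j) : a * b ∈ gradingFiltration 𝒜 (i + j) :=
  smul_mem_gradingFiltration ha hb

theorem mul_mem_gradingFiltration_right (h0 : gradingFiltration 𝒜 0 = ⊤) {i : ℤ} {a : A}
    (ha : a ∈ gradingFiltration 𝒜 i) (b : A) : a * b ∈ gradingFiltration 𝒜 i := by
  simpa using mul_mem_gradingFiltration ha (h0 ▸ mem_top : b ∈ gradingFiltration 𝒜 0)

theorem grade_le_one_mul (hA : DirectSum.IsInternal 𝒜)
    (hgen : Algebra.adjoin K ((𝒜 0 : Set A) ∪ 𝒜 1) = ⊤) {d : ℤ} (hd : d ≠ 0) :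
    𝒜 d ≤ 𝒜 1 * 𝒜 (d - 1) := by
  -- `𝒜 0 + 𝒜 1 * A` is a subalgebra containing the generators, hence all of `A`; now compare
  -- the components of degree `d` on both sides.
  set P := 𝒜 0 ⊔ 𝒜 1 * ⊤
  have h00 : 𝒜 0 * 𝒜 0 ≤ 𝒜 0 := mul_le.mpr fun a ha b hb => by
    simpa using SetLike.GradedMul.mul_mem ha hb
  have h01 : 𝒜 0 * 𝒜 1 ≤ 𝒜 1 := mul_le.mpr fun a ha b hb => by
    simpa using SetLike.GradedMul.mul_mem ha hb
  have hT : ∀ Y, 𝒜 1 * ⊤ * Y ≤ 𝒜 1 * ⊤ := fun Y => by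
    rw [mul_assoc]; exact mul_le_mul' le_rfl le_top
  have hPP : P * P ≤ P := by
    rw [Submodule.sup_mul, Submodule.mul_sup, Submodule.mul_sup, ← mul_assoc]
    exact sup_le (sup_le (h00.trans le_sup_left) (le_sup_of_le_right (mul_le_mul' h01 le_rfl)))
      (sup_le (le_sup_of_le_right (hT _)) (le_sup_of_le_right (hT _)))
  have hP : P = ⊤ := by
    have hle : Algebra.adjoin K ((𝒜 0 : Set A) ∪ 𝒜 1) ≤
        P.toSubalgebra (le_sup_left (b := 𝒜 1 * ⊤) SetLike.GradedOne.one_mem)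
          fun a b ha hb => hPP (mul_mem_mul ha hb) := by
      refine Algebra.adjoin_le (Set.union_subset (fun a ha => le_sup_left (b := 𝒜 1 * ⊤) ha)
        fun a ha => le_sup_right (a := 𝒜 0) ?_)
      simpa using mul_mem_mul ha (mem_top : (1 : A) ∈ ⊤)
    rw [hgen, top_le_iff] at hle
    exact eq_top_iff.mpr fun a _ => (hle ▸ Algebra.mem_top : a ∈ P.toSubalgebra _ _)
  let B : ℤ → Submodule K A := fun e => 𝒜 1 * 𝒜 (e - 1) ⊔ if e = 0 then 𝒜 0 else ⊥
  have hB : B ≤ 𝒜 := fun e => sup_le (mul_le.mpr fun a ha b hb => by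
    simpa using SetLike.GradedMul.mul_mem ha hb) (by split_ifs with he <;> simp [he])
  have htop : ⨆ e, B e = ⊤ := by
    refine top_le_iff.mp (hP ▸ sup_le (le_iSup_of_le 0 (by simp [B])) ?_)
    rw [← hA.submodule_iSup_eq_top, mul_iSup]
    exact iSup_mono' fun e => ⟨e + 1, le_sup_of_le_left (by simp)⟩
  have := hA.submodule_iSupIndep.inf_iSup_eq_of_le hB d
  rw [htop, inf_top_eq] at this
  simpa [B, hd] using this.le

theorem gradingFiltration_succ_le_one_mul (hA : DirectSum.IsInternal 𝒜)
    (hgen : Algebra.adjoin K ((𝒜 0 : Set A) ∪ 𝒜 1) = ⊤) (r : ℕ) :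
    gradingFiltration 𝒜 (r + 1) ≤ gradingFiltration 𝒜 1 * gradingFiltration 𝒜 r :=
  gradingFiltration_le_iff.mpr fun k hk => (grade_le_one_mul hA hgen (by omega)).trans
    (mul_le_mul' (le_gradingFiltration le_rfl) (le_gradingFiltration (by omega)))

theorem gradingFiltration_succ_le_mul_one (hA : DirectSum.IsInternal 𝒜)
    (hgen : Algebra.adjoin K ((𝒜 0 : Set A) ∪ 𝒜 1) = ⊤) (h0 : gradingFiltration 𝒜 0 = ⊤)
    (r : ℕ) : gradingFiltration 𝒜 (r + 1) ≤ gradingFiltration 𝒜 r * gradingFiltration 𝒜 1 := by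
  induction r with
  | zero =>
    rw [Nat.cast_zero, h0, zero_add]
    exact fun a ha => by simpa using mul_mem_mul (mem_top : (1 : A) ∈ ⊤) ha
  | succ r ih =>
    calc gradingFiltration 𝒜 ((r + 1 : ℕ) + 1)
        ≤ gradingFiltration 𝒜 1 * gradingFiltration 𝒜 (r + 1 : ℕ) :=
          gradingFiltration_succ_le_one_mul hA hgen (r + 1)
      _ ≤ gradingFiltration 𝒜 1 * (gradingFiltration 𝒜 r * gradingFiltration 𝒜 1) := by
          push_cast; exact mul_le_mul' le_rfl ih
      _ ≤ gradingFiltration 𝒜 (1 + r) * gradingFiltration 𝒜 1 := by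
          rw [← mul_assoc]
          exact mul_le_mul' (mul_le.mpr fun a ha b hb => mul_mem_gradingFiltration ha hb) le_rfl
      _ = gradingFiltration 𝒜 (r + 1 : ℕ) * gradingFiltration 𝒜 1 := by push_cast; rw [add_comm]

end GradedAlgebra

section RadicalAndSocle

variable {K : Type*} {A : Type} [CommRing K] [Ring A] [Algebra K A] {𝒜 : ℤ → Submodule K A}
  [SetLike.GradedMonoid 𝒜] {W : Type} [AddCommGroup W] [Module A W]

theorem gradingFiltration_smul_smul_le (h0 : gradingFiltration 𝒜 0 = ⊤) (i j : ℤ)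
    (N : Submodule A W) :
    (gradingFiltration 𝒜 i : Set A) • ((gradingFiltration 𝒜 j : Set A) • N) ≤
      (gradingFiltration 𝒜 (i + j) : Set A) • N := by
  refine set_smul_le _ _ _ fun a y ha hy => ?_
  induction y, hy using set_smul_inductionOn generalizing a with
  | smul₀ hb hx =>
    rw [smul_smul]; exact mem_set_smul_of_mem_mem (mul_mem_gradingFiltration ha hb) hx
  | smul₁ c _ ih => rw [smul_smul]; exact ih _ (mul_mem_gradingFiltration_right h0 ha c)
  | add _ _ ih₁ ih₂ => rw [smul_add]; exact add_mem (ih₁ a ha) (ih₂ a ha)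
  | zero => rw [smul_zero]; exact zero_mem _

theorem eq_bot_of_le_gradingFiltration_one_smul (h0 : gradingFiltration 𝒜 0 = ⊤) {n : ℕ}
    (hn : gradingFiltration 𝒜 n = ⊥) {N : Submodule A W}
    (hN : N ≤ (gradingFiltration 𝒜 1 : Set A) • N) : N = ⊥ := by
  have key (r : ℕ) : N ≤ (gradingFiltration 𝒜 r : Set A) • N := by
    induction r with
    | zero =>
      intro x hx
      simpa using mem_set_smul_of_mem_mem
        (by simp [h0] : (1 : A) ∈ gradingFiltration 𝒜 ((0 : ℕ) : ℤ)) hx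
    | succ r ih =>
      calc N ≤ (gradingFiltration 𝒜 1 : Set A) • N := hN
        _ ≤ (gradingFiltration 𝒜 1 : Set A) • ((gradingFiltration 𝒜 r : Set A) • N) :=
          smul_mono_right _ ih
        _ ≤ (gradingFiltration 𝒜 (r + 1 : ℕ) : Set A) • N := by
          rw [Nat.cast_succ, add_comm]; exact gradingFiltration_smul_smul_le h0 _ _ _
  refine le_bot_iff.mp ((key n).trans (set_smul_le _ _ _ fun a x ha _ => ?_))
  rw [hn, SetLike.mem_coe, mem_bot] at ha
  rw [ha, zero_smul]
  exact zero_mem _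

theorem isSemisimpleModule_of_gradingFiltration_one_smul_eq_zero
    [IsSemisimpleRing (SetLike.GradeZero.subalgebra 𝒜)] (h0 : gradingFiltration 𝒜 0 = ⊤)
    (hW : ∀ a ∈ gradingFiltration 𝒜 1, ∀ x : W, a • x = 0) : IsSemisimpleModule A W :=
  isSemisimpleModule_of_forall_exists_smul_eq (SetLike.GradeZero.subalgebra 𝒜) fun a => by
    obtain ⟨b, hb, hab⟩ := exists_sub_mem_gradingFiltration_one h0 a
    exact ⟨b, hb, fun x => by rw [← sub_eq_zero, ← sub_smul]; exact hW _ hab x⟩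

theorem radM_eq_gradingFiltration_one_smul_top
    [IsSemisimpleRing (SetLike.GradeZero.subalgebra 𝒜)] (h0 : gradingFiltration 𝒜 0 = ⊤)
    {n : ℕ} (hn : gradingFiltration 𝒜 n = ⊥) :
    radM A W = (gradingFiltration 𝒜 1 : Set A) • ⊤ := by
  refine le_antisymm (Module.jacobson_le_of_eq_bot ?_) (set_smul_le _ _ _ fun a x ha _ => ?_)
  · have := isSemisimpleModule_of_gradingFiltration_one_smul_eq_zero
      (W := W ⧸ (gradingFiltration 𝒜 1 : Set A) • (⊤ : Submodule A W)) h0 fun a ha y => by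
        obtain ⟨x, rfl⟩ := mkQ_surjective _ y
        rw [← map_smul, mkQ_apply, Quotient.mk_eq_zero]
        exact mem_set_smul_of_mem_mem ha mem_top
    exact IsSemisimpleModule.jacobson_eq_bot A _
  · refine mem_sInf.mpr fun P hP => ?_
    have : IsSimpleModule A (W ⧸ P) := isSimpleModule_iff_isCoatom.mpr hP
    have hbot : (gradingFiltration 𝒜 1 : Set A) • (⊤ : Submodule A (W ⧸ P)) = ⊥ :=
      (eq_bot_or_eq_top _).resolve_right fun htop =>
        bot_ne_top (eq_bot_of_le_gradingFiltration_one_smul h0 hn htop.ge).symm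
    have hx := mem_set_smul_of_mem_mem ha (mem_top : P.mkQ x ∈ (⊤ : Submodule A (W ⧸ P)))
    rwa [hbot, ← map_smul, mkQ_apply, mem_bot, Quotient.mk_eq_zero] at hx

theorem le_socM_of_isSemisimpleModule (N : Submodule A W) [IsSemisimpleModule A N] :
    N ≤ socM A W := by
  rw [← N.map_subtype_top, ← IsSemisimpleModule.sSup_simples_eq_top A N,
    (gc_map_comap N.subtype).l_sSup]
  refine iSup₂_le fun m (hm : IsSimpleModule A m) => le_sSup ?_
  exact isSimpleModule_iff_isAtom.mp (.congr (m.equivMapOfInjective _ N.injective_subtype).symm)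

theorem mem_socM_iff [IsSemisimpleRing (SetLike.GradeZero.subalgebra 𝒜)]
    (h0 : gradingFiltration 𝒜 0 = ⊤) {n : ℕ} (hn : gradingFiltration 𝒜 n = ⊥) {x : W} :
    x ∈ socM A W ↔ ∀ a ∈ gradingFiltration 𝒜 1, a • x = 0 := by
  constructor
  · intro hx
    rw [socM, sSup_eq_iSup'] at hx
    refine iSup_induction _ (motive := fun x => ∀ a ∈ gradingFiltration 𝒜 1, a • x = 0) hx
      (fun S y hy a ha => ?_) (fun a _ => smul_zero a)
      fun y z hy hz a ha => by rw [smul_add, hy a ha, hz a ha, add_zero]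
    have hS : IsAtom S.1 := S.2
    have hbot : (gradingFiltration 𝒜 1 : Set A) • S.1 = ⊥ :=
      (hS.le_iff.mp (set_smul_le _ _ _ fun a x _ hx => S.1.smul_mem a hx)).resolve_right
        fun h => hS.1 (eq_bot_of_le_gradingFiltration_one_smul h0 hn h.ge)
    simpa [hbot] using mem_set_smul_of_mem_mem ha hy
  · intro hx
    have : IsSemisimpleModule A (span A {x}) :=
      isSemisimpleModule_of_gradingFiltration_one_smul_eq_zero h0 fun a ha y => by
        obtain ⟨c, hc⟩ := mem_span_singleton.mp y.2
        ext
        rw [coe_smul, ← hc, smul_smul, hx _ (mul_mem_gradingFiltration_right h0 ha c)]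
        rfl
    exact le_socM_of_isSemisimpleModule _ (mem_span_singleton_self x)

theorem radFilt_eq_gradingFiltration_smul_top
    [IsSemisimpleRing (SetLike.GradeZero.subalgebra 𝒜)] (hA : DirectSum.IsInternal 𝒜)
    (hgen : Algebra.adjoin K ((𝒜 0 : Set A) ∪ 𝒜 1) = ⊤) (h0 : gradingFiltration 𝒜 0 = ⊤)
    {n : ℕ} (hn : gradingFiltration 𝒜 n = ⊥) (r : ℕ) :
    radFilt A W r = (gradingFiltration 𝒜 r : Set A) • ⊤ := by
  induction r with
  | zero => exact (eq_top_iff.mpr fun x _ => by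
      simpa using mem_set_smul_of_mem_mem (h0 ▸ mem_top : (1 : A) ∈ gradingFiltration 𝒜 0)
        (mem_top : x ∈ ⊤)).symm
  | succ r ih =>
    change (radM A (radFilt A W r)).map (radFilt A W r).subtype = _
    rw [radM_eq_gradingFiltration_one_smul_top h0 hn, map_set_smul, map_subtype_top, ih]
    refine le_antisymm (by simpa [add_comm] using gradingFiltration_smul_smul_le h0 1 r ⊤)
      (set_smul_le _ _ _ fun c x hc _ => ?_)
    refine Submodule.mul_induction_on (C := fun c => c • x ∈ _)
      (gradingFiltration_succ_le_one_mul hA hgen r (by simpa using hc)) (fun a ha b hb => ?_)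
      fun c c' hc hc' => by rw [add_smul]; exact add_mem hc hc'
    rw [mul_smul]
    exact mem_set_smul_of_mem_mem ha (mem_set_smul_of_mem_mem hb mem_top)

theorem mem_socFilt_iff [IsSemisimpleRing (SetLike.GradeZero.subalgebra 𝒜)]
    (hA : DirectSum.IsInternal 𝒜) (hgen : Algebra.adjoin K ((𝒜 0 : Set A) ∪ 𝒜 1) = ⊤)
    (h0 : gradingFiltration 𝒜 0 = ⊤) {n : ℕ} (hn : gradingFiltration 𝒜 n = ⊥) (r : ℕ)
    {x : W} : x ∈ socFilt A W r ↔ ∀ a ∈ gradingFiltration 𝒜 r, a • x = 0 := by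
  induction r generalizing x with
  | zero =>
    change x ∈ (⊥ : Submodule A W) ↔ _
    refine ⟨fun hx a _ => by rw [(mem_bot A).mp hx, smul_zero], fun hx => ?_⟩
    simpa using hx 1 (by simp [h0])
  | succ r ih =>
    change (socFilt A W r).mkQ x ∈ socM A _ ↔ _
    simp only [mem_socM_iff h0 hn, mkQ_apply, ← Quotient.mk_smul, Quotient.mk_eq_zero, ih,
      smul_smul]
    refine ⟨fun hx c hc => ?_, fun hx a ha b hb => hx _ ?_⟩
    · refine Submodule.mul_induction_on (gradingFiltration_succ_le_mul_one hA hgen h0 r hc)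
        (fun b hb a ha => hx a ha b hb) fun _ _ h₁ h₂ => by rw [add_smul, h₁, h₂, add_zero]
    · simpa using mul_mem_gradingFiltration hb ha

end RadicalAndSocle

section GradedModule

variable {K : Type*} {A : Type} [CommRing K] [Ring A] [Algebra K A] {𝒜 : ℤ → Submodule K A}
  {M : Type} [AddCommGroup M] [Module K M] [Module A M] {ℳ : ℤ → Submodule K M}
  [SetLike.GradedSMul 𝒜 ℳ]

theorem coe_gradingFiltration_smul_subset (h0 : gradingFiltration 𝒜 0 = ⊤) {i u : ℤ}
    {P : Submodule A M} (hP : (P : Set M) ⊆ gradingFiltration ℳ u) :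
    (((gradingFiltration 𝒜 i : Set A) • P : Submodule A M) : Set M) ⊆
      gradingFiltration ℳ (i + u) := fun x hx => by
  induction x, hx using set_smul_inductionOn with
  | smul₀ ha hy => exact smul_mem_gradingFiltration ha (hP hy)
  | smul₁ c _ ih =>
    simpa using smul_mem_gradingFiltration (h0 ▸ mem_top : c ∈ gradingFiltration 𝒜 0) ih
  | add _ _ ih₁ ih₂ => exact add_mem ih₁ ih₂
  | zero => exact zero_mem _

theorem decompose_smul_of_mem [DirectSum.Decomposition ℳ] {d : ℤ} {a : A} (ha : a ∈ 𝒜 d)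
    (x : M) (k : ℤ) :
    (DirectSum.decompose ℳ (a • x) (d + k) : M) = a • (DirectSum.decompose ℳ x k : M) := by
  induction x using DirectSum.Decomposition.inductionOn ℳ with
  | zero => simp
  | @homogeneous j y =>
    have hy : a • (y : M) ∈ ℳ (d + j) := SetLike.GradedSMul.smul_mem ha y.2
    by_cases hjk : j = k
    · subst hjk
      rw [DirectSum.decompose_of_mem_same ℳ hy, DirectSum.decompose_of_mem_same ℳ y.2]
    · rw [DirectSum.decompose_of_mem_ne ℳ hy (by omega), DirectSum.decompose_of_mem_ne ℳ y.2 hjk,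
        smul_zero]
  | add y z hy hz =>
    simp only [smul_add, DirectSum.decompose_add, DirectSum.add_apply, coe_add, hy, hz]

theorem mem_gradingFiltration_of_decompose_eq_zero [DirectSum.Decomposition ℳ] {u : ℤ}
    {x : M} (h : ∀ k < u, DirectSum.decompose ℳ x k = 0) : x ∈ gradingFiltration ℳ u := by
  classical
  rw [← DirectSum.sum_support_decompose ℳ x]
  refine sum_mem fun k _ => ?_
  by_cases hku : k < u
  · simp [h k hku]
  · exact le_gradingFiltration (not_lt.mp hku) (DirectSum.decompose ℳ x k).2

variable [IsScalarTower K A M]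

theorem grade_inf_span_le_span_smul (hA : ⨆ d, 𝒜 d = ⊤) (hM : iSupIndep ℳ) {k : ℤ}
    {N : Submodule K M} (hN : N ≤ ℳ k) (d : ℤ) :
    ℳ (d + k) ⊓ (span A (N : Set M)).restrictScalars K ≤
      span K ((𝒜 d : Set A) • (N : Set M)) := by
  let B : ℤ → Submodule K M := fun j => span K ((𝒜 (j - k) : Set A) • (N : Set M))
  have hB : B ≤ ℳ := fun j => span_le.mpr <| by
    rintro _ ⟨a, ha, x, hx, rfl⟩
    simpa using SetLike.GradedSMul.smul_mem ha (hN hx)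
  have hspan : (span A (N : Set M)).restrictScalars K = ⨆ j, B j := by
    rw [← span_smul_of_span_eq_top (s := ⋃ d, (𝒜 d : Set A)) (by simpa [span_iUnion] using hA),
      Set.iUnion_smul, span_iUnion]
    exact ((Equiv.subRight k).iSup_comp
      (g := fun d => span K ((𝒜 d : Set A) • (N : Set M)))).symm
  rw [hspan, hM.inf_iSup_eq_of_le hB]
  simp [B]

theorem radFilt_eq_socFilt_of_coe_eq {s t : ℤ} (hst : s ≤ t) (ht : ℳ t ≠ ⊥)
    (hgt : ∀ k, t < k → ℳ k = ⊥)
    (hrad : ∀ r : ℕ, (radFilt A M r : Set M) = gradingFiltration ℳ (s + r))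
    (hsoc : ∀ r : ℕ, (socFilt A M r : Set M) = gradingFiltration ℳ (t + 1 - r)) :
    ∀ r ≤ sInf {k | radFilt A M k = ⊥},
      radFilt A M r = socFilt A M (sInf {k | radFilt A M k = ⊥} - r) := by
  have hbot (k : ℕ) : radFilt A M k = ⊥ ↔ (t - s + 1).toNat ≤ k := by
    rw [← restrictScalars_eq_bot_iff K,
      show (radFilt A M k).restrictScalars K = gradingFiltration ℳ (s + k) from
        SetLike.coe_injective (hrad k), gradingFiltration_eq_bot_iff_lt ht hgt]
    omega
  have hL : sInf {k | radFilt A M k = ⊥} = (t - s + 1).toNat := by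
    rw [show {k | radFilt A M k = ⊥} = Set.Ici (t - s + 1).toNat from Set.ext hbot, csInf_Ici]
  intro r hr
  rw [hL] at hr ⊢
  refine SetLike.coe_injective ?_
  rw [hrad, hsoc, show t + 1 - (((t - s + 1).toNat - r : ℕ) : ℤ) = s + r by omega]

end GradedModule

section Rigidity

variable {K : Type*} {A : Type} [Field K] [Ring A] [Algebra K A] {𝒜 : ℤ → Submodule K A}
  {M : Type} [AddCommGroup M] [Module K M] [Module A M] [IsScalarTower K A M]
  [FiniteDimensional K M] {ℳ : ℤ → Submodule K M} [SetLike.GradedSMul 𝒜 ℳ]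

theorem span_grade_eq_top_of_isCoatom_radM (hM : iSupIndep ℳ) {s : ℤ} (hs : ℳ s ≠ ⊥)
    (hrad : (radM A M : Set M) ⊆ gradingFiltration ℳ (s + 1)) (hco : IsCoatom (radM A M)) :
    span A (ℳ s : Set M) = ⊤ := by
  have : IsNoetherian A M := isNoetherian_of_tower K inferInstance
  by_contra hne
  obtain ⟨P, hP, hle⟩ := (eq_top_or_exists_le_coatom (span A (ℳ s : Set M))).resolve_left hne
  have hPrad : P = radM A M := (hco.le_iff.mp (sInf_le hP)).resolve_left hP.1
  exact hs ((hM.disjoint_gradingFiltration s).eq_bot_of_le fun x hx =>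
    hrad (hPrad ▸ hle (subset_span hx)))

theorem grade_subset_span_singleton (hsoc : IsAtom (socM A M)) {t : ℤ}
    (ht : (ℳ t : Set M) ⊆ socM A M) {x : M} (hx : x ≠ 0) : (ℳ t : Set M) ⊆ span A {x} := by
  have : IsArtinian A M := isArtinian_of_tower K inferInstance
  obtain ⟨S, hS, hSx⟩ := (eq_bot_or_exists_atom_le (span A {x})).resolve_left (by simpa using hx)
  have hSsoc : S = socM A M := (hsoc.le_iff.mp (le_sSup hS)).resolve_left hS.1
  exact fun y hy => hSx (by rw [hSsoc]; exact ht hy)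

theorem decompose_eq_zero_of_forall_smul_eq_zero [DirectSum.Decomposition ℳ]
    (hA : ⨆ d, 𝒜 d = ⊤) (hsoc : IsAtom (socM A M)) {t : ℤ} (ht : ℳ t ≠ ⊥)
    (htsoc : (ℳ t : Set M) ⊆ socM A M) {r : ℕ} {x : M}
    (hx : ∀ a ∈ gradingFiltration 𝒜 r, a • x = 0) {k : ℤ} (hk : k + r ≤ t) :
    DirectSum.decompose ℳ x k = 0 := by
  -- The submodule generated by a nonzero `x_k` contains `ℳ t`, but it meets degree `t` only in
  -- `𝒜 (t - k) • x_k`, which `hx` kills.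
  by_contra hxk
  obtain ⟨y, hy, hy0⟩ := (Submodule.ne_bot_iff _).mp ht
  have hmem := grade_inf_span_le_span_smul hA
    (DirectSum.Decomposition.isInternal ℳ).submodule_iSupIndep
    ((span_singleton_le_iff_mem _ _).mpr (DirectSum.decompose ℳ x k).2) (t - k)
    ⟨(by simpa using hy : y ∈ ℳ (t - k + k)), by
      rw [SetLike.mem_coe, restrictScalars_mem, span_span_of_tower]
      exact grade_subset_span_singleton hsoc htsoc (by simpa using hxk) hy⟩
  refine hy0 ((span_le.mpr ?_ : _ ≤ ⊥) hmem)
  rintro _ ⟨a, ha, z, hz, rfl⟩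
  obtain ⟨c, rfl⟩ := mem_span_singleton.mp hz
  dsimp only
  rw [SetLike.mem_coe, mem_bot, smul_comm, ← decompose_smul_of_mem ha,
    hx a (le_gradingFiltration (by omega) ha)]
  simp

variable [SetLike.GradedMonoid 𝒜] [IsSemisimpleRing (SetLike.GradeZero.subalgebra 𝒜)]

theorem exists_coe_radFilt_eq_gradingFiltration (hA : DirectSum.IsInternal 𝒜)
    (hgen : Algebra.adjoin K ((𝒜 0 : Set A) ∪ 𝒜 1) = ⊤) (h0 : gradingFiltration 𝒜 0 = ⊤)
    {n : ℕ} (hn : gradingFiltration 𝒜 n = ⊥) (hM : DirectSum.IsInternal ℳ)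
    (hhead : IsSimpleModule A (M ⧸ radFilt A M 1)) :
    ∃ s, ℳ s ≠ ⊥ ∧ ∀ r : ℕ, (radFilt A M r : Set M) = gradingFiltration ℳ (s + r) := by
  have := IsSimpleModule.nontrivial A (M ⧸ radFilt A M 1)
  have : Nontrivial M := (radFilt A M 1).mkQ_surjective.nontrivial
  obtain ⟨s, hs, hlt⟩ := exists_lowest_grade hM
  have hGs : gradingFiltration ℳ s = ⊤ := gradingFiltration_eq_top hM.submodule_iSup_eq_top hlt
  have hsub (r : ℕ) : (radFilt A M r : Set M) ⊆ gradingFiltration ℳ (s + r) := by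
    rw [radFilt_eq_gradingFiltration_smul_top hA hgen h0 hn, add_comm]
    exact coe_gradingFiltration_smul_subset h0 fun x _ => hGs ▸ mem_top
  have hrad : radFilt A M 1 = radM A M := by
    rw [radFilt_eq_gradingFiltration_smul_top hA hgen h0 hn,
      radM_eq_gradingFiltration_one_smul_top h0 hn, Nat.cast_one]
  have hspan : span A (ℳ s : Set M) = ⊤ :=
    span_grade_eq_top_of_isCoatom_radM hM.submodule_iSupIndep hs (hrad ▸ hsub 1)
      (hrad ▸ isSimpleModule_iff_isCoatom.mp hhead)
  refine ⟨s, hs, fun r => (hsub r).antisymm fun x hx => ?_⟩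
  refine gradingFiltration_induction hx (fun k hk y hy => ?_) (zero_mem _) fun _ _ => add_mem
  have hy' := grade_inf_span_le_span_smul hA.submodule_iSup_eq_top hM.submodule_iSupIndep
    le_rfl (k - s) ⟨(by simpa using hy : y ∈ ℳ (k - s + s)), by simp [hspan]⟩
  rw [SetLike.mem_coe, radFilt_eq_gradingFiltration_smul_top hA hgen h0 hn]
  refine (span_le.mpr ?_ :
    _ ≤ ((gradingFiltration 𝒜 r : Set A) • ⊤ : Submodule A M).restrictScalars K) hy'
  rintro _ ⟨a, ha, z, -, rfl⟩
  exact mem_set_smul_of_mem_mem (le_gradingFiltration (by omega) ha) mem_top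

theorem exists_coe_socFilt_eq_gradingFiltration (hA : DirectSum.IsInternal 𝒜)
    (hgen : Algebra.adjoin K ((𝒜 0 : Set A) ∪ 𝒜 1) = ⊤) (h0 : gradingFiltration 𝒜 0 = ⊤)
    {n : ℕ} (hn : gradingFiltration 𝒜 n = ⊥) (hM : DirectSum.IsInternal ℳ)
    (hsoc : IsSimpleModule A (socFilt A M 1)) :
    ∃ t, ℳ t ≠ ⊥ ∧ (∀ k, t < k → ℳ k = ⊥) ∧
      ∀ r : ℕ, (socFilt A M r : Set M) = gradingFiltration ℳ (t + 1 - r) := by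
  classical
  let _ := hM.chooseDecomposition
  have := IsSimpleModule.nontrivial A (socFilt A M 1)
  have : Nontrivial M := (socFilt A M 1).injective_subtype.nontrivial
  obtain ⟨t, ht, hgt⟩ := exists_highest_grade hM
  have hkill {i u : ℤ} {a : A} {x : M} (ha : a ∈ gradingFiltration 𝒜 i)
      (hx : x ∈ gradingFiltration ℳ u) (hiu : t + 1 ≤ i + u) : a • x = 0 := by
    have hbot : gradingFiltration ℳ (i + u) = ⊥ :=
      gradingFiltration_eq_bot_iff.mpr fun k hk => hgt k (by omega)
    simpa [hbot] using smul_mem_gradingFiltration ha hx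
  have hsocM : socFilt A M 1 = socM A M := ext fun x => by
    rw [mem_socFilt_iff hA hgen h0 hn, mem_socM_iff h0 hn, Nat.cast_one]
  have htsoc : (ℳ t : Set M) ⊆ socM A M := fun y hy =>
    (mem_socM_iff h0 hn).mpr fun a ha => hkill ha (le_gradingFiltration le_rfl hy) (by omega)
  refine ⟨t, ht, hgt, fun r => Set.ext fun x => ?_⟩
  rw [SetLike.mem_coe, mem_socFilt_iff hA hgen h0 hn]
  exact ⟨fun hx => mem_gradingFiltration_of_decompose_eq_zero fun k hk =>
      decompose_eq_zero_of_forall_smul_eq_zero hA.submodule_iSup_eq_top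
        (hsocM ▸ isSimpleModule_iff_isAtom.mp hsoc) ht htsoc hx (by omega),
    fun hx a ha => hkill ha hx (by omega)⟩

end Rigidity

/-- [BGS, Proposition 2.4.1]: let `A` be a finite dimensional positively graded algebra
over a field `K` with `A_0` semisimple and `A` generated by `A_0` and `A_1`, and let `M`
be a finite dimensional graded `A`-module.  (a) If `M ⧸ rad M` is irreducible then the
radical filtration of `M` coincides, up to shift, with the grading filtration
`Gr_d M = ⊕_{k ≥ d} M_k`.  (b) If `soc M` is irreducible then the socle filtration
coincides, up to shift, with the grading filtration.  (c) Consequently `M` is rigid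
(`rad^r M = soc^{ℓℓ(M)-r} M` for `0 ≤ r ≤ ℓℓ(M)`) whenever both `M ⧸ rad M` and `soc M`
are irreducible. -/
theorem positively_graded_radical_grading_rigidity
    (K : Type) [Field K] (A : Type) [Ring A] [Algebra K A] [FiniteDimensional K A]
    (𝒜 : ℤ → Submodule K A) (hA : DirectSum.IsInternal 𝒜) (h1 : (1 : A) ∈ 𝒜 0)
    (hmul : ∀ (d e : ℤ) (x : A), x ∈ 𝒜 d → ∀ y ∈ 𝒜 e, x * y ∈ 𝒜 (d + e))
    (hpos : ∀ d : ℤ, d < 0 → 𝒜 d = ⊥)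
    (hss : IsSemisimpleRing
      ↥((𝒜 0).toSubalgebra h1 (fun x y hx hy => by simpa using hmul 0 0 x hx y hy)))
    (hgen : Algebra.adjoin K ((𝒜 0 : Set A) ∪ (𝒜 1 : Set A)) = ⊤)
    (M : Type) [AddCommGroup M] [Module K M] [Module A M] [IsScalarTower K A M]
    [FiniteDimensional K M]
    (ℳ : ℤ → Submodule K M) (hM : DirectSum.IsInternal ℳ)
    (hMs : ∀ (d e : ℤ) (a : A), a ∈ 𝒜 d → ∀ x ∈ ℳ e, a • x ∈ ℳ (d + e)) :
    (IsSimpleModule A (M ⧸ radFilt A M 1) →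
      ∃ s : ℤ, ∀ r : ℕ, (radFilt A M r : Set M)
        = ↑(⨆ (k : ℤ) (_ : s + (r : ℤ) ≤ k), ℳ k)) ∧
    (IsSimpleModule A ↥(socFilt A M 1) →
      ∃ s : ℤ, ∀ r : ℕ, (socFilt A M r : Set M)
        = ↑(⨆ (k : ℤ) (_ : s - (r : ℤ) ≤ k), ℳ k)) ∧
    (IsSimpleModule A (M ⧸ radFilt A M 1) → IsSimpleModule A ↥(socFilt A M 1) →
      ∀ r ≤ sInf {k | radFilt A M k = ⊥},
        radFilt A M r = socFilt A M (sInf {k | radFilt A M k = ⊥} - r)) := by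
  let _ : SetLike.GradedMonoid 𝒜 :=
    { one_mem := h1, mul_mem := fun d e x y hx hy => hmul d e x hx y hy }
  let _ : SetLike.GradedSMul 𝒜 ℳ := ⟨fun d e a x ha hx => hMs d e a ha x hx⟩
  have : IsSemisimpleRing (SetLike.GradeZero.subalgebra 𝒜) := hss
  have h0 := gradingFiltration_eq_top hA.submodule_iSup_eq_top hpos
  obtain ⟨n, hn⟩ := exists_gradingFiltration_eq_bot hA.submodule_iSupIndep
  refine ⟨fun hhead => ?_, fun hsoc => ?_, fun hhead hsoc => ?_⟩
  · obtain ⟨s, -, hrad⟩ := exists_coe_radFilt_eq_gradingFiltration hA hgen h0 hn hM hhead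
    exact ⟨s, hrad⟩
  · obtain ⟨t, -, -, hsoc⟩ := exists_coe_socFilt_eq_gradingFiltration hA hgen h0 hn hM hsoc
    exact ⟨t + 1, hsoc⟩
  · obtain ⟨s, hs, hrad⟩ := exists_coe_radFilt_eq_gradingFiltration hA hgen h0 hn hM hhead
    obtain ⟨t, ht, hgt, hsoc⟩ := exists_coe_socFilt_eq_gradingFiltration hA hgen h0 hn hM hsoc
    exact radFilt_eq_socFilt_of_coe_eq (not_lt.mp fun h => hs (hgt s h)) ht hgt hrad hsoc
end

section
/- Every Koszul algebra is quadratic: if A = ⊕_{d≥0} A_d is a Koszul algebra over a field (A_0 semisimple and A_0 admits a graded projective resolution ⋯ → P² → P¹ → P⁰ → A_0 → 0 with P^d generated in degree d), then A is generated as an algebra by A_0 and A_1, with defining relations in degree 2. -/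
/-!
Let `π : T(A₀ ⊕ A₁) → A` be the canonical map and give a word the weight "number of letters
from `A₁`", so that `π` sends weight `n` into `A_n`.

To see that `π` is onto, lift the augmentation to a graded `ε : P⁰ → A` and pick `u ∈ P⁰_0`
with `ε u = 1`. For `a ∈ A_{n+1}`, `a • u` lies in the kernel of the augmentation, so
`a • u = δ₀ q` with `q ∈ P¹_{n+1}`; as `P¹` is generated in degree one, `q = ∑ bⱼ • yⱼ` with
`bⱼ ∈ A_n`, `yⱼ ∈ P¹_1`, and `a = ε (δ₀ q) = ∑ bⱼ ε (δ₀ yⱼ) ∈ A_n A_1`.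

For the relations, let `d : ⊕_{c ∈ A₁} A → A`, `k ↦ ∑ k_c c`, and compare it with `δ₀`: send
the basis vector `e_c` to a degree-one preimage `f e_c ∈ P¹` of `c • u`, and use projectivity of
`P¹` for a graded `g : P¹ → ⊕ A` with `d ∘ g = ε ∘ δ₀`. A homogeneous syzygy `k` of `d` is then
`g (f k)`, which comes from `P²` and so is an `A`-combination of syzygies with coefficients in
`A₁`, plus `k - g (f k) = ∑ k_c (e_c - g (f e_c))`, a combination of syzygies with coefficients
in `A₀`. Now let `x ∈ ker π` have weight `n + 1`. Modulo relations of weight one,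
`x = ∑ y_c c` with `y_c` of weight `n`; then `(π y_c)_c` is a syzygy, and lifting its
decomposition into low-degree syzygies produces relations of weight `≤ 2` whose difference with
`x` has coefficients of weight `n` in `ker π`. Induction on the weight concludes.
-/

/-- The (left) ideal of positively graded elements, `A_{>0}`. -/
noncomputable def posIdeal (K A : Type) [Field K] [Ring A] [Algebra K A]
    (𝒜 : ℤ → Submodule K A) : Ideal A :=
  Ideal.span {x : A | ∃ d : ℤ, 0 < d ∧ x ∈ 𝒜 d}

open DirectSum

section GradedProj

variable {ι R M N : Type*} [DecidableEq ι] [Semiring R] [AddCommMonoid M] [Module R M]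
  [AddCommMonoid N] [Module R N] (ℳ : ι → Submodule R M) [Decomposition ℳ]

def gradedProj (i : ι) : M →ₗ[R] M :=
  (ℳ i).subtype ∘ₗ DFinsupp.lapply i ∘ₗ (decomposeLinearEquiv ℳ).toLinearMap

lemma gradedProj_mem (i : ι) (x : M) : gradedProj ℳ i x ∈ ℳ i := (decompose ℳ x i).2

variable {ℳ}

lemma gradedProj_of_mem {i : ι} {x : M} (hx : x ∈ ℳ i) : gradedProj ℳ i x = x :=
  decompose_of_mem_same ℳ hx

lemma gradedProj_of_mem_of_ne {i j : ι} {x : M} (hx : x ∈ ℳ i) (h : i ≠ j) :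
    gradedProj ℳ j x = 0 :=
  decompose_of_mem_ne ℳ hx h

lemma gradedProj_map {𝒩 : ι → Submodule R N} [Decomposition 𝒩] {F : Type*} [FunLike F M N]
    [AddMonoidHomClass F M N] (φ : F) (hφ : ∀ i, ∀ x ∈ ℳ i, φ x ∈ 𝒩 i) (i : ι) (x : M) :
    gradedProj 𝒩 i (φ x) = φ (gradedProj ℳ i x) := by
  induction x using Decomposition.inductionOn ℳ with
  | zero => simp
  | homogeneous x =>
    rename_i j
    rcases eq_or_ne j i with rfl | hji
    · rw [gradedProj_of_mem x.2, gradedProj_of_mem (hφ _ _ x.2)]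
    · rw [gradedProj_of_mem_of_ne x.2 hji, gradedProj_of_mem_of_ne (hφ _ _ x.2) hji, map_zero]
  | add x y hx hy => simp only [map_add, hx, hy]

lemma exists_mem_eq_of_mem_range {𝒩 : ι → Submodule R N} [Decomposition 𝒩] {F : Type*}
    [FunLike F M N] [AddMonoidHomClass F M N] {φ : F} (hφ : ∀ i, ∀ x ∈ ℳ i, φ x ∈ 𝒩 i) {i : ι}
    {y : N} (hy : y ∈ 𝒩 i) (hrange : y ∈ Set.range φ) : ∃ x ∈ ℳ i, φ x = y := by
  obtain ⟨x, rfl⟩ := hrange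
  exact ⟨gradedProj ℳ i x, gradedProj_mem ℳ i x, by
    rw [← gradedProj_map φ hφ, gradedProj_of_mem hy]⟩

end GradedProj

section GradedSMul

variable {ι K A M : Type*} [AddCommGroup ι] [CommSemiring K] [Semiring A] [Algebra K A]
  [AddCommMonoid M] [Module K M] [Module A M] {𝒜 : ι → Submodule K A} {ℳ : ι → Submodule K M}
  [SetLike.GradedSMul 𝒜 ℳ]

lemma linearCombination_mem_of_forall_mem {α : Type*} {v : α → M} {i j : ι}
    (hv : ∀ c, v c ∈ ℳ j) {k : α →₀ A} (hk : ∀ c, k c ∈ 𝒜 i) :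
    Finsupp.linearCombination A v k ∈ ℳ (i + j) := by
  rw [Finsupp.linearCombination_apply]
  exact Submodule.sum_mem _ fun c _ => SetLike.GradedSMul.smul_mem (hk c) (hv c)

variable [DecidableEq ι] [Decomposition ℳ]

lemma gradedProj_smul_of_mem_left {i : ι} {a : A} (ha : a ∈ 𝒜 i) (j : ι) (x : M) :
    gradedProj ℳ (i + j) (a • x) = a • gradedProj ℳ j x := by
  induction x using Decomposition.inductionOn ℳ with
  | zero => simp
  | homogeneous x =>
    rename_i k
    have hax : a • (x : M) ∈ ℳ (i + k) := SetLike.GradedSMul.smul_mem ha x.2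
    rcases eq_or_ne k j with rfl | hkj
    · rw [gradedProj_of_mem x.2, gradedProj_of_mem hax]
    · rw [gradedProj_of_mem_of_ne x.2 hkj, gradedProj_of_mem_of_ne hax (by simpa using hkj),
        smul_zero]
  | add x y hx hy => simp only [smul_add, map_add, hx, hy]

variable [Decomposition 𝒜]

lemma gradedProj_smul_of_mem_right {j : ι} {x : M} (hx : x ∈ ℳ j) (i : ι) (a : A) :
    gradedProj ℳ (i + j) (a • x) = gradedProj 𝒜 i a • x := by
  induction a using Decomposition.inductionOn 𝒜 with
  | zero => simp
  | homogeneous a =>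
    rename_i k
    have hax : (a : A) • x ∈ ℳ (k + j) := SetLike.GradedSMul.smul_mem a.2 hx
    rcases eq_or_ne k i with rfl | hki
    · rw [gradedProj_of_mem a.2, gradedProj_of_mem hax]
    · rw [gradedProj_of_mem_of_ne a.2 hki, gradedProj_of_mem_of_ne hax (by simpa using hki),
        zero_smul]
  | add a b ha hb => simp only [add_smul, map_add, ha, hb]

lemma mem_span_smul_of_span_eq_top {j : ι} (hgen : Submodule.span A (ℳ j : Set M) = ⊤) {i : ι}
    {x : M} (hx : x ∈ ℳ (i + j)) :
    x ∈ Submodule.span K (Set.image2 (· • ·) (𝒜 i : Set A) (ℳ j : Set M)) := by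
  obtain ⟨n, a, y, rfl⟩ := Submodule.mem_span_set'.mp (hgen.ge (Submodule.mem_top (x := x)))
  rw [← gradedProj_of_mem (ℳ := ℳ) hx, map_sum]
  refine Submodule.sum_mem _ fun k _ => Submodule.subset_span ?_
  rw [gradedProj_smul_of_mem_right (𝒜 := 𝒜) (y k).2]
  exact Set.mem_image2_of_mem (gradedProj_mem 𝒜 i _) (y k).2

lemma exists_linearMap_apply_of_mem [IsScalarTower K A M] {N : Type*} [AddCommMonoid N]
    [Module K N] [Module A N] [IsScalarTower K A N] (p : ι → N →ₗ[K] N)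
    (hp : ∀ i j, ∀ a ∈ 𝒜 i, ∀ y, p (i + j) (a • y) = a • p j y) (φ : M →ₗ[A] N) :
    ∃ ψ : M →ₗ[A] N, ∀ i, ∀ x ∈ ℳ i, ψ x = p i (φ x) := by
  let ψ : M →ₗ[K] N := toModule K ι N (fun i => p i ∘ₗ φ.restrictScalars K ∘ₗ (ℳ i).subtype) ∘ₗ
    (decomposeLinearEquiv ℳ).toLinearMap
  have hψ : ∀ i, ∀ x ∈ ℳ i, ψ x = p i (φ x) := by
    intro i x hx
    simp only [ψ, LinearMap.comp_apply, LinearEquiv.coe_toLinearMap,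
      decomposeLinearEquiv_apply, decompose_of_mem ℳ hx]
    rw [← lof_eq_of K, toModule_lof]
    rfl
  have hψ_smul (a : A) (x : M) : ψ (a • x) = a • ψ x := by
    induction x using Decomposition.inductionOn ℳ with
    | zero => simp
    | homogeneous x =>
      rename_i j
      induction a using Decomposition.inductionOn 𝒜 with
      | zero => simp
      | homogeneous a =>
        rename_i i
        rw [hψ _ _ (SetLike.GradedSMul.smul_mem a.2 x.2), hψ _ _ x.2, map_smul]
        exact hp i j a a.2 _
      | add a b ha hb => rw [add_smul, map_add, ha, hb, add_smul]
    | add x y hx hy => rw [smul_add, map_add, map_add, hx, hy, smul_add]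
  exact ⟨{ ψ with map_smul' := hψ_smul }, hψ⟩

end GradedSMul

lemma eq_zero_of_mem_of_neg {K A : Type*} [Semiring K] [AddCommMonoid A] [Module K A]
    {𝒜 : ℤ → Submodule K A} (hneg : ∀ i < 0, 𝒜 i = ⊥) {i : ℤ} (hi : i < 0) {a : A}
    (ha : a ∈ 𝒜 i) : a = 0 := by
  rwa [hneg i hi, Submodule.mem_bot] at ha

section PosIdeal

variable {K A : Type} [Field K] [Ring A] [Algebra K A] {𝒜 : ℤ → Submodule K A}

lemma mem_posIdeal_of_mem {i : ℤ} (hi : 0 < i) {a : A} (ha : a ∈ 𝒜 i) :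
    a ∈ posIdeal K A 𝒜 :=
  Ideal.subset_span ⟨i, hi, ha⟩

variable [Decomposition 𝒜] (hneg : ∀ i < 0, 𝒜 i = ⊥)
include hneg

lemma sub_gradedProj_zero_mem_posIdeal (a : A) : a - gradedProj 𝒜 0 a ∈ posIdeal K A 𝒜 := by
  induction a using Decomposition.inductionOn 𝒜 with
  | zero => simp
  | homogeneous a =>
    rename_i i
    rcases lt_trichotomy i 0 with hi | rfl | hi
    · simp [eq_zero_of_mem_of_neg hneg hi a.2]
    · rw [gradedProj_of_mem a.2, sub_self]
      exact Submodule.zero_mem _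
    · rw [gradedProj_of_mem_of_ne a.2 hi.ne', sub_zero]
      exact mem_posIdeal_of_mem hi a.2
  | add a b ha hb => simpa only [map_add, add_sub_add_comm] using add_mem ha hb

variable [SetLike.GradedMonoid 𝒜]

lemma gradedProj_zero_mul_eq_zero {a : A} (ha : gradedProj 𝒜 0 a = 0) (b : A) :
    gradedProj 𝒜 0 (b * a) = 0 := by
  induction b using Decomposition.inductionOn 𝒜 with
  | zero => simp
  | homogeneous b =>
    rename_i i
    rcases lt_or_ge i 0 with hi | hi
    · simp [eq_zero_of_mem_of_neg hneg hi b.2]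
    · have h := gradedProj_smul_of_mem_left (ℳ := 𝒜) b.2 (-i) a
      rw [add_neg_cancel, smul_eq_mul, smul_eq_mul] at h
      rcases hi.eq_or_lt with rfl | hi
      · rw [h, neg_zero, ha, mul_zero]
      · rw [h, eq_zero_of_mem_of_neg hneg (neg_neg_of_pos hi) (gradedProj_mem 𝒜 _ a), mul_zero]
  | add b c hb hc => rw [add_mul, map_add, hb, hc, add_zero]

lemma mem_posIdeal_iff {a : A} : a ∈ posIdeal K A 𝒜 ↔ gradedProj 𝒜 0 a = 0 := by
  refine ⟨fun ha => ?_, fun ha => by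
    simpa [ha] using sub_gradedProj_zero_mem_posIdeal hneg a⟩
  induction ha using Submodule.span_induction with
  | mem a ha =>
    obtain ⟨i, hi, ha⟩ := ha
    exact gradedProj_of_mem_of_ne ha hi.ne'
  | zero => simp
  | add a b _ _ ha hb => rw [map_add, ha, hb, add_zero]
  | smul b a _ ha => exact gradedProj_zero_mul_eq_zero hneg ha b

lemma gradedProj_mem_posIdeal (i : ℤ) {a : A} (ha : a ∈ posIdeal K A 𝒜) :
    gradedProj 𝒜 i a ∈ posIdeal K A 𝒜 := by
  rw [mem_posIdeal_iff hneg] at ha ⊢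
  rcases eq_or_ne i 0 with rfl | hi
  · rw [gradedProj_of_mem (gradedProj_mem 𝒜 0 a), ha]
  · exact gradedProj_of_mem_of_ne (gradedProj_mem 𝒜 i a) hi

end PosIdeal

namespace FreeAlgebra

variable (K : Type*) [CommSemiring K] (X Y : Type*)

def weightSpan (w : ℕ) : Submodule K (FreeAlgebra K (X ⊕ Y)) :=
  Submodule.span K {z | ∃ l : List (X ⊕ Y), l.countP (·.isRight) = w ∧ z = (l.map (ι K)).prod}

variable {K X Y}

lemma prod_mem_weightSpan (l : List (X ⊕ Y)) :
    (l.map (ι K)).prod ∈ weightSpan K X Y (l.countP (·.isRight)) :=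
  Submodule.subset_span ⟨l, rfl, rfl⟩

lemma ι_inl_mem_weightSpan (x : X) : ι K (Sum.inl x : X ⊕ Y) ∈ weightSpan K X Y 0 := by
  simpa using prod_mem_weightSpan (K := K) [Sum.inl x]

lemma ι_inr_mem_weightSpan (y : Y) : ι K (Sum.inr y : X ⊕ Y) ∈ weightSpan K X Y 1 := by
  simpa using prod_mem_weightSpan (K := K) [Sum.inr y]

lemma algebraMap_mem_weightSpan (c : K) :
    algebraMap K (FreeAlgebra K (X ⊕ Y)) c ∈ weightSpan K X Y 0 := by
  rw [Algebra.algebraMap_eq_smul_one]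
  exact Submodule.smul_mem _ _ (by simpa using prod_mem_weightSpan (K := K) ([] : List (X ⊕ Y)))

lemma mul_mem_weightSpan {v w : ℕ} {x y : FreeAlgebra K (X ⊕ Y)} (hx : x ∈ weightSpan K X Y v)
    (hy : y ∈ weightSpan K X Y w) : x * y ∈ weightSpan K X Y (v + w) := by
  induction hx using Submodule.span_induction with
  | mem x hx =>
    obtain ⟨l, rfl, rfl⟩ := hx
    induction hy using Submodule.span_induction with
    | mem y hy =>
      obtain ⟨l', rfl, rfl⟩ := hy
      simpa [List.countP_append] using prod_mem_weightSpan (K := K) (l ++ l')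
    | zero => simp
    | add a b _ _ ha hb => rw [mul_add]; exact add_mem ha hb
    | smul c a _ ha => rw [mul_smul_comm]; exact Submodule.smul_mem _ _ ha
  | zero => simp
  | add a b _ _ ha hb => rw [add_mul]; exact add_mem ha hb
  | smul c a _ ha => rw [smul_mul_assoc]; exact Submodule.smul_mem _ _ ha

lemma iSup_weightSpan : ⨆ w, weightSpan K X Y w = ⊤ := by
  rw [eq_top_iff]
  rintro z -
  induction z using FreeAlgebra.induction with
  | grade0 c => exact Submodule.mem_iSup_of_mem 0 (algebraMap_mem_weightSpan c)
  | grade1 g =>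
    cases g with
    | inl x => exact Submodule.mem_iSup_of_mem 0 (ι_inl_mem_weightSpan x)
    | inr y => exact Submodule.mem_iSup_of_mem 1 (ι_inr_mem_weightSpan y)
  | mul a b ha hb =>
    obtain ⟨f, hf, rfl⟩ := (Submodule.mem_iSup_iff_exists_finsupp _ _).mp ha
    obtain ⟨g, hg, rfl⟩ := (Submodule.mem_iSup_iff_exists_finsupp _ _).mp hb
    rw [Finsupp.sum, Finsupp.sum, Finset.sum_mul_sum]
    exact Submodule.sum_mem _ fun v _ => Submodule.sum_mem _ fun w _ =>
      Submodule.mem_iSup_of_mem (v + w) (mul_mem_weightSpan (hf v) (hg w))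
  | add a b ha hb => exact add_mem ha hb

lemma weightSpan_le_span_countP_le {v w : ℕ} (h : v ≤ w) :
    weightSpan K X Y v ≤ Submodule.span K
      {z | ∃ l : List (X ⊕ Y), l.countP (·.isRight) ≤ w ∧ z = (l.map (ι K)).prod} :=
  Submodule.span_mono fun _ ⟨l, hl, hz⟩ => ⟨l, hl.trans_le h, hz⟩

end FreeAlgebra

lemma List.exists_eq_append_cons_of_countP_eq_succ {α : Type*} {p : α → Bool} {l : List α}
    {n : ℕ} (h : l.countP p = n + 1) :
    ∃ l₁ a l₂, l = l₁ ++ a :: l₂ ∧ p a ∧ l₁.countP p = n ∧ l₂.countP p = 0 := by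
  induction l using List.reverseRecOn with
  | nil => simp at h
  | append_singleton l a ih =>
    by_cases ha : p a
    · refine ⟨l, a, [], rfl, ha, ?_, rfl⟩
      simpa [List.countP_append, ha] using h
    · obtain ⟨l₁, b, l₂, rfl, hb, h₁, h₂⟩ := ih (by simpa [List.countP_append, ha] using h)
      exact ⟨l₁, b, l₂ ++ [a], by simp, hb, h₁, by simp [List.countP_append, h₂, ha]⟩

section FreeLift

open FreeAlgebra

variable {K A : Type*} [Field K] [Ring A] [Algebra K A] (𝒜 : ℤ → Submodule K A)

abbrev freeLift : FreeAlgebra K (𝒜 0 ⊕ 𝒜 1) →ₐ[K] A :=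
  lift K (Sum.elim (fun a : 𝒜 0 => (a : A)) (fun a : 𝒜 1 => (a : A)))

def quadraticRelations : TwoSidedIdeal (FreeAlgebra K (𝒜 0 ⊕ 𝒜 1)) :=
  TwoSidedIdeal.span {x | x ∈ Submodule.span K {z | ∃ l : List (𝒜 0 ⊕ 𝒜 1),
    l.countP (·.isRight) ≤ 2 ∧ z = (l.map (ι K)).prod} ∧ freeLift 𝒜 x = 0}

/-- Syzygies of `(c)_{c ∈ A₁}` with coefficients in `A_e`, i.e. of total degree `e + 1`. -/
def syzygies (e : ℤ) : Submodule K (𝒜 1 →₀ A) where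
  carrier := {k | (∀ c, k c ∈ 𝒜 e) ∧ Finsupp.linearCombination A (fun c : 𝒜 1 => (c : A)) k = 0}
  add_mem' hk hk' := ⟨fun c => add_mem (hk.1 c) (hk'.1 c), by rw [map_add, hk.2, hk'.2, add_zero]⟩
  zero_mem' := ⟨fun _ => zero_mem _, map_zero _⟩
  smul_mem' t k hk := ⟨fun c => Submodule.smul_mem _ t (hk.1 c), by
    rw [LinearMap.map_smul_of_tower, hk.2, smul_zero]⟩

def GeneratedInDegreeOne : Prop := ∀ n : ℕ, 𝒜 (n + 1) ≤ 𝒜 n * 𝒜 1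

def SyzygiesGeneratedInDegreeTwo : Prop :=
  ∀ n : ℕ, syzygies 𝒜 n ≤ Submodule.span K
    {k | ∃ m e : ℕ, e ≤ 1 ∧ m + e = n ∧ ∃ a ∈ 𝒜 m, ∃ κ ∈ syzygies 𝒜 e, k = a • κ}

variable {𝒜}

lemma freeLift_linearCombination (y : 𝒜 1 →₀ FreeAlgebra K (𝒜 0 ⊕ 𝒜 1)) :
    freeLift 𝒜 (Finsupp.linearCombination _ (fun c => ι K (Sum.inr c)) y) =
      Finsupp.linearCombination A (fun c : 𝒜 1 => (c : A))
        (y.mapRange (freeLift 𝒜) (map_zero _)) := by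
  simp [Finsupp.linearCombination_apply, Finsupp.sum_mapRange_index, map_finsuppSum]

lemma freeLift_eq_zero_of_mem_quadraticRelations {x : FreeAlgebra K (𝒜 0 ⊕ 𝒜 1)}
    (hx : x ∈ quadraticRelations 𝒜) : freeLift 𝒜 x = 0 :=
  (TwoSidedIdeal.mem_ker _).mp <|
    TwoSidedIdeal.span_le.mpr (fun _ hz => (TwoSidedIdeal.mem_ker _).mpr hz.2) hx

lemma mem_quadraticRelations_of_weight_le_two {n : ℕ} (hn : n ≤ 2)
    {x : FreeAlgebra K (𝒜 0 ⊕ 𝒜 1)} (hx : x ∈ weightSpan K (𝒜 0) (𝒜 1) n)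
    (hπx : freeLift 𝒜 x = 0) : x ∈ quadraticRelations 𝒜 :=
  TwoSidedIdeal.subset_span ⟨weightSpan_le_span_countP_le hn hx, hπx⟩

lemma linearCombination_mem_quadraticRelations {y : 𝒜 1 →₀ FreeAlgebra K (𝒜 0 ⊕ 𝒜 1)}
    (hy : ∀ c, y c ∈ quadraticRelations 𝒜) :
    Finsupp.linearCombination _ (fun c => ι K (Sum.inr c)) y ∈ quadraticRelations 𝒜 := by
  rw [Finsupp.linearCombination_apply]
  exact sum_mem fun c _ => (quadraticRelations 𝒜).mul_mem_right _ _ (hy c)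

lemma ι_inr_mul_sub_mem_quadraticRelations (v : 𝒜 1) {w : FreeAlgebra K (𝒜 0 ⊕ 𝒜 1)}
    (hw : w ∈ weightSpan K (𝒜 0) (𝒜 1) 0) {c : 𝒜 1} (hc : (c : A) = v * freeLift 𝒜 w) :
    ι K (Sum.inr v) * w - ι K (Sum.inr c) ∈ quadraticRelations 𝒜 :=
  mem_quadraticRelations_of_weight_le_two (n := 1 + 0) (by norm_num)
    (sub_mem (mul_mem_weightSpan (ι_inr_mem_weightSpan v) hw) (ι_inr_mem_weightSpan c))
    (by simp [hc])

lemma linearCombination_sub_mem_quadraticRelations {n : ℕ}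
    (ih : ∀ z ∈ weightSpan K (𝒜 0) (𝒜 1) n, freeLift 𝒜 z = 0 → z ∈ quadraticRelations 𝒜)
    {y y' : 𝒜 1 →₀ FreeAlgebra K (𝒜 0 ⊕ 𝒜 1)} (hy : ∀ c, y c ∈ weightSpan K (𝒜 0) (𝒜 1) n)
    (hy' : ∀ c, y' c ∈ weightSpan K (𝒜 0) (𝒜 1) n)
    (h : ∀ c, freeLift 𝒜 (y c) = freeLift 𝒜 (y' c)) :
    Finsupp.linearCombination _ (fun c => ι K (Sum.inr c)) y -
      Finsupp.linearCombination _ (fun c => ι K (Sum.inr c)) y' ∈ quadraticRelations 𝒜 := by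
  rw [← map_sub]
  exact linearCombination_mem_quadraticRelations fun c =>
    ih _ (sub_mem (hy c) (hy' c)) (by simp [h c])

lemma linearCombination_mem_weightSpan {n : ℕ} {y : 𝒜 1 →₀ FreeAlgebra K (𝒜 0 ⊕ 𝒜 1)}
    (hy : ∀ c, y c ∈ weightSpan K (𝒜 0) (𝒜 1) n) :
    Finsupp.linearCombination _ (fun c => ι K (Sum.inr c)) y ∈
      weightSpan K (𝒜 0) (𝒜 1) (n + 1) := by
  rw [Finsupp.linearCombination_apply]
  exact Submodule.sum_mem _ fun c _ => mul_mem_weightSpan (hy c) (ι_inr_mem_weightSpan c)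

lemma exists_mem_weightSpan_freeLift_eq (hgen : GeneratedInDegreeOne 𝒜) (n : ℕ) {a : A}
    (ha : a ∈ 𝒜 n) : ∃ x ∈ weightSpan K (𝒜 0) (𝒜 1) n, freeLift 𝒜 x = a := by
  induction n generalizing a with
  | zero => exact ⟨ι K (Sum.inl ⟨a, ha⟩), ι_inl_mem_weightSpan _, by simp⟩
  | succ n ih =>
    replace ha : a ∈ 𝒜 n * 𝒜 1 := hgen n (by exact_mod_cast ha)
    refine Submodule.mul_induction_on ha (fun b hb c hc => ?_) ?_
    · obtain ⟨x, hx, rfl⟩ := ih hb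
      exact ⟨x * ι K (Sum.inr ⟨c, hc⟩), mul_mem_weightSpan hx (ι_inr_mem_weightSpan _), by simp⟩
    · rintro _ _ ⟨x, hx, rfl⟩ ⟨y, hy, rfl⟩
      exact ⟨x + y, add_mem hx hy, map_add _ x y⟩

lemma freeLift_surjective [Decomposition 𝒜] (hneg : ∀ i < 0, 𝒜 i = ⊥)
    (hgen : GeneratedInDegreeOne 𝒜) : Function.Surjective (freeLift 𝒜) := by
  intro a
  induction a using Decomposition.inductionOn 𝒜 with
  | zero => exact ⟨0, map_zero _⟩
  | homogeneous a =>
    rename_i i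
    rcases lt_or_ge i 0 with hi | hi
    · exact ⟨0, by rw [map_zero, eq_zero_of_mem_of_neg hneg hi a.2]⟩
    · obtain ⟨x, -, hx⟩ := exists_mem_weightSpan_freeLift_eq hgen i.toNat
        (by rw [Int.toNat_of_nonneg hi]; exact a.2)
      exact ⟨x, hx⟩
  | add a b ha hb =>
    obtain ⟨x, rfl⟩ := ha
    obtain ⟨y, rfl⟩ := hb
    exact ⟨x + y, map_add _ x y⟩

variable [SetLike.GradedMonoid 𝒜]

lemma freeLift_mem_of_mem_weightSpan {n : ℕ} {x : FreeAlgebra K (𝒜 0 ⊕ 𝒜 1)}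
    (hx : x ∈ weightSpan K (𝒜 0) (𝒜 1) n) : freeLift 𝒜 x ∈ 𝒜 n := by
  induction hx using Submodule.span_induction with
  | mem x hx =>
    obtain ⟨l, rfl, rfl⟩ := hx
    induction l with
    | nil => simpa using SetLike.one_mem_graded 𝒜
    | cons g l ih =>
      rw [List.map_cons, List.prod_cons, map_mul]
      cases g with
      | inl a => simpa using SetLike.mul_mem_graded a.2 ih
      | inr a =>
        convert SetLike.mul_mem_graded a.2 ih using 2
        · simp [List.countP_cons, add_comm]
        · simp
  | zero => simp
  | add x y _ _ hx hy => rw [map_add]; exact add_mem hx hy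
  | smul c x _ hx => rw [map_smul]; exact Submodule.smul_mem _ c hx

lemma exists_sub_linearCombination_mem_quadraticRelations {n : ℕ}
    {x : FreeAlgebra K (𝒜 0 ⊕ 𝒜 1)} (hx : x ∈ weightSpan K (𝒜 0) (𝒜 1) (n + 1)) :
    ∃ y : 𝒜 1 →₀ FreeAlgebra K (𝒜 0 ⊕ 𝒜 1), (∀ c, y c ∈ weightSpan K (𝒜 0) (𝒜 1) n) ∧
      x - Finsupp.linearCombination _ (fun c => ι K (Sum.inr c)) y ∈ quadraticRelations 𝒜 := by
  classical
  induction hx using Submodule.span_induction with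
  | mem x hx =>
    obtain ⟨l, hl, rfl⟩ := hx
    obtain ⟨l₁, g, l₂, rfl, hg, hl₁, hl₂⟩ := List.exists_eq_append_cons_of_countP_eq_succ hl
    obtain ⟨v, rfl⟩ : ∃ v, g = Sum.inr v := Sum.isRight_iff.mp hg
    have hw₂ := prod_mem_weightSpan (K := K) l₂
    rw [hl₂] at hw₂
    let c : 𝒜 1 := ⟨v * freeLift 𝒜 (l₂.map (ι K)).prod, by
      simpa using SetLike.mul_mem_graded v.2 (freeLift_mem_of_mem_weightSpan hw₂)⟩
    refine ⟨Finsupp.single c (l₁.map (ι K)).prod, fun c' => ?_, ?_⟩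
    · rw [Finsupp.single_apply]
      split_ifs
      exacts [hl₁ ▸ prod_mem_weightSpan l₁, zero_mem _]
    · convert (quadraticRelations 𝒜).mul_mem_left (l₁.map (ι K)).prod _
        (ι_inr_mul_sub_mem_quadraticRelations v hw₂ (c := c) rfl) using 1
      simp [Finsupp.linearCombination_single, List.prod_append, mul_sub]
  | zero => exact ⟨0, fun _ => zero_mem _, by simp⟩
  | add x x' _ _ hx hx' =>
    obtain ⟨y, hy, hxy⟩ := hx
    obtain ⟨y', hy', hxy'⟩ := hx'
    refine ⟨y + y', fun c => add_mem (hy c) (hy' c), ?_⟩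
    convert (quadraticRelations 𝒜).add_mem hxy hxy' using 1
    rw [map_add]
    abel
  | smul t x _ hx =>
    obtain ⟨y, hy, hxy⟩ := hx
    refine ⟨t • y, fun c => Submodule.smul_mem _ t (hy c), ?_⟩
    rw [LinearMap.map_smul_of_tower, ← smul_sub, Algebra.smul_def]
    exact (quadraticRelations 𝒜).mul_mem_left _ _ hxy

variable [Decomposition 𝒜]

/-- A `K`-linear choice of lifts: it makes the syzygies whose lift is a relation a submodule. -/
lemma exists_linearMap_weightSpan_section (hgen : GeneratedInDegreeOne 𝒜) (n : ℕ) :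
    ∃ ℓ : A →ₗ[K] FreeAlgebra K (𝒜 0 ⊕ 𝒜 1), (∀ a, ℓ a ∈ weightSpan K (𝒜 0) (𝒜 1) n) ∧
      ∀ a ∈ 𝒜 n, freeLift 𝒜 (ℓ a) = a := by
  let f : weightSpan K (𝒜 0) (𝒜 1) n →ₗ[K] 𝒜 n :=
    LinearMap.codRestrict _ ((freeLift 𝒜).toLinearMap ∘ₗ Submodule.subtype _)
      fun x => freeLift_mem_of_mem_weightSpan x.2
  obtain ⟨g, hg⟩ := f.exists_rightInverse_of_surjective <| LinearMap.range_eq_top.mpr fun a => by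
    obtain ⟨x, hx, hxa⟩ := exists_mem_weightSpan_freeLift_eq hgen n a.2
    exact ⟨⟨x, hx⟩, Subtype.ext hxa⟩
  let proj : A →ₗ[K] 𝒜 n := LinearMap.codRestrict _ (gradedProj 𝒜 n) (gradedProj_mem 𝒜 n)
  refine ⟨Submodule.subtype _ ∘ₗ g ∘ₗ proj, fun a => (g _).2, fun a ha => ?_⟩
  have hproj : proj a = ⟨a, ha⟩ := Subtype.ext (gradedProj_of_mem ha)
  simp only [LinearMap.comp_apply, hproj]
  exact congrArg Subtype.val (LinearMap.congr_fun hg ⟨a, ha⟩)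

lemma linearCombination_mem_quadraticRelations_of_lift_smul (hgen : GeneratedInDegreeOne 𝒜)
    {m e : ℕ} (he : e ≤ 1)
    (ih : ∀ z ∈ weightSpan K (𝒜 0) (𝒜 1) (m + e), freeLift 𝒜 z = 0 → z ∈ quadraticRelations 𝒜)
    {a : A} (ha : a ∈ 𝒜 m) {κ : 𝒜 1 →₀ A} (hκ : κ ∈ syzygies 𝒜 e)
    {y : 𝒜 1 →₀ FreeAlgebra K (𝒜 0 ⊕ 𝒜 1)} (hy : ∀ c, y c ∈ weightSpan K (𝒜 0) (𝒜 1) (m + e))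
    (hπy : ∀ c, freeLift 𝒜 (y c) = a * κ c) :
    Finsupp.linearCombination _ (fun c => ι K (Sum.inr c)) y ∈ quadraticRelations 𝒜 := by
  obtain ⟨Z, hZ, rfl⟩ := exists_mem_weightSpan_freeLift_eq hgen m ha
  obtain ⟨ℓ, hℓ, hπℓ⟩ := exists_linearMap_weightSpan_section hgen e
  let W := κ.mapRange ℓ (map_zero _)
  have hW : Finsupp.linearCombination _ (fun c => ι K (Sum.inr c)) W ∈ quadraticRelations 𝒜 := by
    refine mem_quadraticRelations_of_weight_le_two (by omega)
      (linearCombination_mem_weightSpan fun c => hℓ _) ?_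
    rw [freeLift_linearCombination, ← hκ.2]
    congr 1
    ext c
    simp [W, hπℓ _ (hκ.1 c)]
  have hdiff := linearCombination_sub_mem_quadraticRelations ih hy (y' := Z • W)
    (fun c => mul_mem_weightSpan hZ (hℓ _)) (fun c => by simp [hπy, W, hπℓ _ (hκ.1 c)])
  rw [map_smul, smul_eq_mul] at hdiff
  simpa using (quadraticRelations 𝒜).add_mem hdiff ((quadraticRelations 𝒜).mul_mem_left Z _ hW)

lemma linearCombination_mem_quadraticRelations_of_syzygy (hgen : GeneratedInDegreeOne 𝒜)
    (hsyz : SyzygiesGeneratedInDegreeTwo 𝒜) {n : ℕ}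
    (ih : ∀ z ∈ weightSpan K (𝒜 0) (𝒜 1) n, freeLift 𝒜 z = 0 → z ∈ quadraticRelations 𝒜)
    {y : 𝒜 1 →₀ FreeAlgebra K (𝒜 0 ⊕ 𝒜 1)} (hy : ∀ c, y c ∈ weightSpan K (𝒜 0) (𝒜 1) n)
    (hπy : y.mapRange (freeLift 𝒜) (map_zero _) ∈ syzygies 𝒜 n) :
    Finsupp.linearCombination _ (fun c => ι K (Sum.inr c)) y ∈ quadraticRelations 𝒜 := by
  obtain ⟨ℓ, hℓ, hπℓ⟩ := exists_linearMap_weightSpan_section hgen n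
  let L : (𝒜 1 →₀ A) →ₗ[K] FreeAlgebra K (𝒜 0 ⊕ 𝒜 1) :=
    (Finsupp.linearCombination _ (fun c => ι K (Sum.inr c))).restrictScalars K ∘ₗ
      Finsupp.mapRange.linearMap ℓ
  have hL : syzygies 𝒜 n ≤ ((quadraticRelations 𝒜).asIdeal.restrictScalars K).comap L := by
    refine (hsyz n).trans (Submodule.span_le.mpr ?_)
    rintro _ ⟨m, e, he, rfl, a, ha, κ, hκ, rfl⟩
    have hmem (c : 𝒜 1) : a * κ c ∈ 𝒜 ↑(m + e) := by
      simpa using SetLike.mul_mem_graded ha (hκ.1 c)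
    simpa [L] using linearCombination_mem_quadraticRelations_of_lift_smul hgen he ih ha hκ
      (fun c => hℓ _) (fun c => by simp [hπℓ _ (hmem c)])
  have hdiff := linearCombination_sub_mem_quadraticRelations ih hy
    (y' := (y.mapRange (freeLift 𝒜) (map_zero _)).mapRange ℓ (map_zero _)) (fun c => hℓ _)
    (fun c => by simp [hπℓ _ (freeLift_mem_of_mem_weightSpan (hy c))])
  have hLy : Finsupp.linearCombination _ (fun c => ι K (Sum.inr c))
      ((y.mapRange (freeLift 𝒜) (map_zero _)).mapRange ℓ (map_zero _)) ∈ quadraticRelations 𝒜 :=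
    hL hπy
  simpa using (quadraticRelations 𝒜).add_mem hdiff hLy

lemma mem_quadraticRelations_of_mem_weightSpan (hgen : GeneratedInDegreeOne 𝒜)
    (hsyz : SyzygiesGeneratedInDegreeTwo 𝒜) (n : ℕ) {x : FreeAlgebra K (𝒜 0 ⊕ 𝒜 1)}
    (hx : x ∈ weightSpan K (𝒜 0) (𝒜 1) n) (hπx : freeLift 𝒜 x = 0) :
    x ∈ quadraticRelations 𝒜 := by
  induction n generalizing x with
  | zero => exact mem_quadraticRelations_of_weight_le_two (by norm_num) hx hπx
  | succ n ih =>
    obtain ⟨y, hy, hxy⟩ := exists_sub_linearCombination_mem_quadraticRelations hx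
    have hπy : freeLift 𝒜 (Finsupp.linearCombination _ (fun c => ι K (Sum.inr c)) y) = 0 := by
      simpa [hπx] using freeLift_eq_zero_of_mem_quadraticRelations hxy
    rw [freeLift_linearCombination] at hπy
    simpa using (quadraticRelations 𝒜).add_mem hxy
      (linearCombination_mem_quadraticRelations_of_syzygy hgen hsyz (fun z => ih) hy
        ⟨fun c => freeLift_mem_of_mem_weightSpan (hy c), hπy⟩)

theorem ker_freeLift_eq_quadraticRelations (hgen : GeneratedInDegreeOne 𝒜)
    (hsyz : SyzygiesGeneratedInDegreeTwo 𝒜) :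
    TwoSidedIdeal.ker (freeLift 𝒜) = quadraticRelations 𝒜 := by
  refine le_antisymm (fun x hx => ?_)
    (TwoSidedIdeal.span_le.mpr fun z hz => (TwoSidedIdeal.mem_ker _).mpr hz.2)
  have hx' : x ∈ ⨆ w, weightSpan K (𝒜 0) (𝒜 1) w := by rw [iSup_weightSpan]; trivial
  obtain ⟨f, hf, rfl⟩ := (Submodule.mem_iSup_iff_exists_finsupp _ _).mp hx'
  refine sum_mem fun n _ => mem_quadraticRelations_of_mem_weightSpan hgen hsyz n (hf n) ?_
  have hproj : gradedProj 𝒜 n (freeLift 𝒜 (f.sum fun _ z => z)) = freeLift 𝒜 (f n) := by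
    rw [Finsupp.sum, map_sum, map_sum, Finset.sum_eq_single n]
    · exact gradedProj_of_mem (freeLift_mem_of_mem_weightSpan (hf n))
    · intro m _ hmn
      exact gradedProj_of_mem_of_ne (freeLift_mem_of_mem_weightSpan (hf m)) (by exact_mod_cast hmn)
    · intro hn
      rw [Finsupp.notMem_support_iff.mp hn, map_zero, map_zero]
  rw [← hproj, (TwoSidedIdeal.mem_ker _).mp hx, map_zero]

end FreeLift

section Resolution

variable {K A : Type} [Field K] [Ring A] [Algebra K A] {𝒜 : ℤ → Submodule K A}
  {P₀ P₁ P₂ : Type*} [AddCommGroup P₀] [Module K P₀] [Module A P₀]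
  [AddCommGroup P₁] [Module K P₁] [Module A P₁] [AddCommGroup P₂] [Module K P₂] [Module A P₂]
  {𝒫₀ : ℤ → Submodule K P₀} {𝒫₁ : ℤ → Submodule K P₁} {𝒫₂ : ℤ → Submodule K P₂}

lemma exists_graded_lift_mkQ [SetLike.GradedMonoid 𝒜] [Decomposition 𝒜] [IsScalarTower K A P₀]
    [Decomposition 𝒫₀] [SetLike.GradedSMul 𝒜 𝒫₀] [Module.Projective A P₀]
    (hneg : ∀ i < 0, 𝒜 i = ⊥) (ε : P₀ →ₗ[A] A ⧸ posIdeal K A 𝒜)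
    (hε : ∀ i, ∀ x ∈ 𝒫₀ i, ∃ a ∈ 𝒜 i, ε x = Submodule.Quotient.mk a) :
    ∃ ε' : P₀ →ₗ[A] A, (∀ i, ∀ x ∈ 𝒫₀ i, ε' x ∈ 𝒜 i) ∧ (posIdeal K A 𝒜).mkQ ∘ₗ ε' = ε := by
  obtain ⟨ε₁, hε₁⟩ := Module.projective_lifting_property (posIdeal K A 𝒜).mkQ ε
    (Submodule.mkQ_surjective _)
  obtain ⟨ε', hε'⟩ := exists_linearMap_apply_of_mem (ℳ := 𝒫₀) (fun i => gradedProj 𝒜 i)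
    (fun i j a ha y => gradedProj_smul_of_mem_left (𝒜 := 𝒜) (ℳ := 𝒜) ha j y) ε₁
  refine ⟨ε', fun i x hx => hε' i x hx ▸ gradedProj_mem 𝒜 i _, ?_⟩
  ext x
  induction x using Decomposition.inductionOn 𝒫₀ with
  | zero => simp
  | homogeneous x =>
    rename_i i
    obtain ⟨a, ha, hxa⟩ := hε i x x.2
    have hmem : ε₁ x - a ∈ posIdeal K A 𝒜 := by
      rw [← Submodule.Quotient.eq, ← hxa, ← hε₁]
      rfl
    have hproj := gradedProj_mem_posIdeal hneg i hmem
    rw [map_sub, gradedProj_of_mem ha] at hproj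
    simp only [LinearMap.comp_apply, Submodule.mkQ_apply, hε' i x x.2, hxa]
    exact (Submodule.Quotient.eq _).mpr hproj
  | add x y hx hy => simp only [map_add, hx, hy]

lemma exists_mem_zero_apply_eq_one [SetLike.GradedMonoid 𝒜] [Decomposition 𝒜]
    [Decomposition 𝒫₀] (hneg : ∀ i < 0, 𝒜 i = ⊥) {ε : P₀ →ₗ[A] A}
    (hε : ∀ i, ∀ x ∈ 𝒫₀ i, ε x ∈ 𝒜 i) (hsurj : Function.Surjective ((posIdeal K A 𝒜).mkQ ∘ₗ ε)) :
    ∃ u ∈ 𝒫₀ 0, ε u = 1 := by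
  obtain ⟨u, hu⟩ := hsurj (Submodule.Quotient.mk 1)
  refine ⟨gradedProj 𝒫₀ 0 u, gradedProj_mem 𝒫₀ 0 u, ?_⟩
  have hmem : ε u - 1 ∈ posIdeal K A 𝒜 := (Submodule.Quotient.eq _).mp hu
  rw [mem_posIdeal_iff hneg, map_sub, gradedProj_of_mem (SetLike.one_mem_graded 𝒜),
    sub_eq_zero] at hmem
  rw [← gradedProj_map ε hε, hmem]

lemma exists_mem_apply_eq_smul [SetLike.GradedSMul 𝒜 𝒫₀] [Decomposition 𝒫₀] [Decomposition 𝒫₁]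
    {ε : P₀ →ₗ[A] A} {u : P₀} (hu : u ∈ 𝒫₀ 0) (hεu : ε u = 1) {δ₀ : P₁ →ₗ[A] P₀}
    (hδ₀ : ∀ i, ∀ x ∈ 𝒫₁ i, δ₀ x ∈ 𝒫₀ i)
    (hexact₀ : LinearMap.ker ((posIdeal K A 𝒜).mkQ ∘ₗ ε) = LinearMap.range δ₀) {i : ℤ}
    (hi : 0 < i) {a : A} (ha : a ∈ 𝒜 i) : ∃ q ∈ 𝒫₁ i, δ₀ q = a • u := by
  have hau : a • u ∈ 𝒫₀ i := by simpa using SetLike.GradedSMul.smul_mem ha hu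
  refine exists_mem_eq_of_mem_range hδ₀ hau (LinearMap.mem_range.mp ?_)
  rw [← hexact₀, LinearMap.mem_ker, LinearMap.comp_apply, map_smul, hεu, smul_eq_mul, mul_one,
    Submodule.mkQ_apply, Submodule.Quotient.mk_eq_zero]
  exact mem_posIdeal_of_mem hi ha

theorem generatedInDegreeOne_of_exact [Decomposition 𝒜] [IsScalarTower K A P₁]
    [Decomposition 𝒫₀] [Decomposition 𝒫₁] [SetLike.GradedSMul 𝒜 𝒫₀] [SetLike.GradedSMul 𝒜 𝒫₁]
    {ε : P₀ →ₗ[A] A} (hε : ∀ i, ∀ x ∈ 𝒫₀ i, ε x ∈ 𝒜 i) {u : P₀} (hu : u ∈ 𝒫₀ 0)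
    (hεu : ε u = 1) {δ₀ : P₁ →ₗ[A] P₀} (hδ₀ : ∀ i, ∀ x ∈ 𝒫₁ i, δ₀ x ∈ 𝒫₀ i)
    (hgen₁ : Submodule.span A (𝒫₁ 1 : Set P₁) = ⊤)
    (hexact₀ : LinearMap.ker ((posIdeal K A 𝒜).mkQ ∘ₗ ε) = LinearMap.range δ₀) :
    GeneratedInDegreeOne 𝒜 := by
  intro n a ha
  obtain ⟨q, hq, hqa⟩ := exists_mem_apply_eq_smul hu hεu hδ₀ hexact₀ (by positivity) ha
  have haq : a = ε (δ₀ q) := by rw [hqa, map_smul, hεu, smul_eq_mul, mul_one]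
  rw [haq]
  refine (Submodule.span_le (p := (𝒜 n * 𝒜 1).comap ((ε ∘ₗ δ₀).restrictScalars K))).mpr ?_
    (mem_span_smul_of_span_eq_top (𝒜 := 𝒜) hgen₁ hq)
  rintro _ ⟨b, hb, y, hy, rfl⟩
  simpa using Submodule.mul_mem_mul hb (hε _ _ (hδ₀ _ _ hy))

lemma posIdeal_le_range_linearCombination (hgen : GeneratedInDegreeOne 𝒜) :
    (posIdeal K A 𝒜 : Submodule A A) ≤
      LinearMap.range (Finsupp.linearCombination A (fun c : 𝒜 1 => (c : A))) := by
  rw [Finsupp.range_linearCombination]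
  refine Ideal.span_le.mpr ?_
  rintro a ⟨i, hi, ha⟩
  obtain ⟨n, rfl⟩ : ∃ n : ℕ, i = n + 1 := ⟨i.toNat - 1, by omega⟩
  refine Submodule.mul_induction_on (hgen n ha) (fun b _ c hc => ?_) (fun _ _ => add_mem)
  have hc' : c ∈ Submodule.span A (Set.range fun c : 𝒜 1 => (c : A)) :=
    Submodule.subset_span ⟨⟨c, hc⟩, rfl⟩
  exact Submodule.smul_mem _ b hc'

lemma linearCombination_mapRange_gradedProj [SetLike.GradedMonoid 𝒜] [Decomposition 𝒜] (i : ℤ)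
    (k : 𝒜 1 →₀ A) :
    Finsupp.linearCombination A (fun c : 𝒜 1 => (c : A))
        (k.mapRange (gradedProj 𝒜 (i - 1)) (map_zero _)) =
      gradedProj 𝒜 i (Finsupp.linearCombination A (fun c : 𝒜 1 => (c : A)) k) := by
  induction k using Finsupp.induction_linear with
  | zero => simp
  | add k k' hk hk' => simp only [Finsupp.mapRange_add (map_add _), map_add, hk, hk']
  | single c a =>
    have h := gradedProj_smul_of_mem_right (ℳ := 𝒜) (𝒜 := 𝒜) c.2 (i - 1) a
    rw [sub_add_cancel, smul_eq_mul, smul_eq_mul] at h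
    simp [h]

lemma exists_graded_lift_linearCombination [SetLike.GradedMonoid 𝒜] [Decomposition 𝒜]
    [IsScalarTower K A P₁] [Decomposition 𝒫₁] [SetLike.GradedSMul 𝒜 𝒫₁] [Module.Projective A P₁]
    (hgen : GeneratedInDegreeOne 𝒜) {ε : P₀ →ₗ[A] A} (hε : ∀ i, ∀ x ∈ 𝒫₀ i, ε x ∈ 𝒜 i)
    {δ₀ : P₁ →ₗ[A] P₀} (hδ₀ : ∀ i, ∀ x ∈ 𝒫₁ i, δ₀ x ∈ 𝒫₀ i)
    (hεδ₀ : ∀ x, ε (δ₀ x) ∈ posIdeal K A 𝒜) :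
    ∃ g : P₁ →ₗ[A] (𝒜 1 →₀ A), (∀ i, ∀ x ∈ 𝒫₁ i, ∀ c, g x c ∈ 𝒜 (i - 1)) ∧
      ∀ x, Finsupp.linearCombination A (fun c : 𝒜 1 => (c : A)) (g x) = ε (δ₀ x) := by
  set d := Finsupp.linearCombination A (fun c : 𝒜 1 => (c : A))
  obtain ⟨g', hg'⟩ := Module.projective_lifting_property d.rangeRestrict
    (LinearMap.codRestrict _ (ε ∘ₗ δ₀) fun x => posIdeal_le_range_linearCombination hgen (hεδ₀ x))
    d.surjective_rangeRestrict
  have hdg' (x : P₁) : d (g' x) = ε (δ₀ x) := congrArg Subtype.val (LinearMap.congr_fun hg' x)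
  obtain ⟨g, hg⟩ := exists_linearMap_apply_of_mem (ℳ := 𝒫₁)
    (fun i => Finsupp.mapRange.linearMap (gradedProj 𝒜 (i - 1))) (fun i j a ha k => by
      ext c
      simpa [add_sub_assoc] using
        gradedProj_smul_of_mem_left (𝒜 := 𝒜) (ℳ := 𝒜) ha (j - 1) (k c)) g'
  refine ⟨g, fun i x hx c => by simpa [hg i x hx] using gradedProj_mem 𝒜 _ _, fun x => ?_⟩
  induction x using Decomposition.inductionOn 𝒫₁ with
  | zero => simp
  | homogeneous x =>
    rename_i i
    rw [hg i x x.2, Finsupp.mapRange.linearMap_apply, linearCombination_mapRange_gradedProj, hdg',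
      gradedProj_of_mem (hε _ _ (hδ₀ _ _ x.2))]
  | add x y hx hy => rw [map_add, map_add, map_add, map_add, hx, hy]

lemma apply_mem_span_smul_syzygies_one [Decomposition 𝒜] [IsScalarTower K A P₂]
    [Decomposition 𝒫₁] [Decomposition 𝒫₂] [SetLike.GradedSMul 𝒜 𝒫₂] {δ₁ : P₂ →ₗ[A] P₁}
    (hδ₁ : ∀ i, ∀ x ∈ 𝒫₂ i, δ₁ x ∈ 𝒫₁ i) (hgen₂ : Submodule.span A (𝒫₂ 2 : Set P₂) = ⊤)
    {g : P₁ →ₗ[A] (𝒜 1 →₀ A)} (hg : ∀ i, ∀ x ∈ 𝒫₁ i, ∀ c, g x c ∈ 𝒜 (i - 1))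
    (hgδ₁ : ∀ z, Finsupp.linearCombination A (fun c : 𝒜 1 => (c : A)) (g (δ₁ z)) = 0) {m : ℕ}
    {x : P₁} (hx : x ∈ 𝒫₁ (m + 2)) (hrange : x ∈ LinearMap.range δ₁) :
    g x ∈ Submodule.span K {k | ∃ a ∈ 𝒜 m, ∃ κ ∈ syzygies 𝒜 1, k = a • κ} := by
  obtain ⟨q, hq, rfl⟩ := exists_mem_eq_of_mem_range hδ₁ hx (LinearMap.mem_range.mp hrange)
  refine (Submodule.span_le (p := (Submodule.span K _).comap ((g ∘ₗ δ₁).restrictScalars K))).mpr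
    ?_ (mem_span_smul_of_span_eq_top (𝒜 := 𝒜) hgen₂ hq)
  rintro _ ⟨a, ha, z, hz, rfl⟩
  refine Submodule.subset_span ⟨a, ha, g (δ₁ z), ⟨fun c => ?_, hgδ₁ z⟩, by simp⟩
  simpa using hg 2 _ (hδ₁ 2 z hz) c

theorem syzygiesGeneratedInDegreeTwo_of_exact [SetLike.GradedMonoid 𝒜] [Decomposition 𝒜]
    [IsScalarTower K A P₁] [IsScalarTower K A P₂] [Decomposition 𝒫₀] [Decomposition 𝒫₁]
    [Decomposition 𝒫₂] [SetLike.GradedSMul 𝒜 𝒫₀] [SetLike.GradedSMul 𝒜 𝒫₁]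
    [SetLike.GradedSMul 𝒜 𝒫₂] [Module.Projective A P₁] (hgen : GeneratedInDegreeOne 𝒜)
    {ε : P₀ →ₗ[A] A} (hε : ∀ i, ∀ x ∈ 𝒫₀ i, ε x ∈ 𝒜 i) {u : P₀} (hu : u ∈ 𝒫₀ 0)
    (hεu : ε u = 1) {δ₀ : P₁ →ₗ[A] P₀} (hδ₀ : ∀ i, ∀ x ∈ 𝒫₁ i, δ₀ x ∈ 𝒫₀ i)
    {δ₁ : P₂ →ₗ[A] P₁} (hδ₁ : ∀ i, ∀ x ∈ 𝒫₂ i, δ₁ x ∈ 𝒫₁ i)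
    (hgen₂ : Submodule.span A (𝒫₂ 2 : Set P₂) = ⊤)
    (hexact₀ : LinearMap.ker ((posIdeal K A 𝒜).mkQ ∘ₗ ε) = LinearMap.range δ₀)
    (hexact₁ : LinearMap.ker δ₀ = LinearMap.range δ₁) :
    SyzygiesGeneratedInDegreeTwo 𝒜 := by
  classical
  set d := Finsupp.linearCombination A (fun c : 𝒜 1 => (c : A))
  have hεδ₀ (x : P₁) : ε (δ₀ x) ∈ posIdeal K A 𝒜 := by
    have hx : δ₀ x ∈ LinearMap.ker ((posIdeal K A 𝒜).mkQ ∘ₗ ε) :=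
      hexact₀ ▸ LinearMap.mem_range_self δ₀ x
    simpa using hx
  obtain ⟨g, hg, hdg⟩ := exists_graded_lift_linearCombination hgen hε hδ₀ hεδ₀
  have hgδ₁ (z : P₂) : d (g (δ₁ z)) = 0 := by
    have hz : δ₁ z ∈ LinearMap.ker δ₀ := hexact₁ ▸ LinearMap.mem_range_self δ₁ z
    rw [hdg, LinearMap.mem_ker.mp hz, map_zero]
  choose p hp hδp using fun c : 𝒜 1 => exists_mem_apply_eq_smul hu hεu hδ₀ hexact₀ one_pos c.2
  let κ (c : 𝒜 1) : 𝒜 1 →₀ A := Finsupp.single c 1 - g (p c)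
  have hκ (c : 𝒜 1) : κ c ∈ syzygies 𝒜 0 := by
    refine ⟨fun c' => sub_mem ?_ (by simpa using hg 1 _ (hp c) c'), ?_⟩
    · rw [Finsupp.single_apply]
      split_ifs
      exacts [SetLike.one_mem_graded 𝒜, zero_mem _]
    · rw [map_sub, hdg, hδp, map_smul, hεu, smul_eq_mul, mul_one, Finsupp.linearCombination_single,
        one_smul, sub_self]
  have hδ₀p : δ₀ ∘ₗ Finsupp.linearCombination A p = LinearMap.toSpanSingleton A P₀ u ∘ₗ d := by
    ext c
    simp [d, hδp]
  have hsplit :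
      LinearMap.id - g ∘ₗ Finsupp.linearCombination A p = Finsupp.linearCombination A κ := by
    ext c
    simp [κ]
  intro n k hk
  rcases n with _ | m
  · exact Submodule.subset_span ⟨0, 0, Nat.zero_le 1, rfl, 1, SetLike.one_mem_graded 𝒜, k, hk,
      (one_smul _ _).symm⟩
  have hpk : Finsupp.linearCombination A p k ∈ 𝒫₁ (m + 2) := by
    simpa [add_assoc, one_add_one_eq_two] using linearCombination_mem_of_forall_mem hp hk.1
  have hδpk : δ₀ (Finsupp.linearCombination A p k) = 0 := by
    rw [← LinearMap.comp_apply, hδ₀p, LinearMap.comp_apply, show d k = 0 from hk.2, map_zero]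
  have hk_split := LinearMap.congr_fun hsplit k
  rw [LinearMap.sub_apply, LinearMap.id_apply, LinearMap.comp_apply, sub_eq_iff_eq_add] at hk_split
  rw [hk_split]
  refine add_mem ?_ (Submodule.span_mono ?_
    (apply_mem_span_smul_syzygies_one hδ₁ hgen₂ hg hgδ₁ hpk (hexact₁ ▸ hδpk)))
  · rw [Finsupp.linearCombination_apply]
    exact Submodule.sum_mem _ fun c _ => Submodule.subset_span
      ⟨m + 1, 0, Nat.zero_le 1, rfl, k c, hk.1 c, κ c, hκ c, rfl⟩
  · rintro _ ⟨a, ha, κ, hκ, rfl⟩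
    exact ⟨m, 1, le_rfl, rfl, a, ha, κ, hκ, rfl⟩

end Resolution

/-- [BGS, Corollary 2.3.3]: every Koszul algebra is quadratic.  Let `A` be a positively
graded algebra over a field `K` with `A_0` semisimple, and suppose the `A`-module
`A_0 = A ⧸ A_{>0}` admits a graded projective resolution `⋯ → P¹ → P⁰ → A_0 → 0` in
which each `P^i` is generated by its degree-`i` component (`A` is Koszul).  Then `A` is
quadratic: the canonical map `π` from the free algebra on `A_0 ⊕ A_1` onto `A` is
surjective, and its kernel is generated, as a two-sided ideal, by its elements of weight
at most `2` (where letters from `A_1` have weight one and letters from `A_0` weight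
zero), i.e. `A` is generated by `A_0` and `A_1` with defining relations in degree `≤ 2`. -/
theorem koszul_implies_quadratic
    (K : Type) [Field K] (A : Type) [Ring A] [Algebra K A]
    (𝒜 : ℤ → Submodule K A) (hA : DirectSum.IsInternal 𝒜) (h1 : (1 : A) ∈ 𝒜 0)
    (hmul : ∀ (d e : ℤ) (x : A), x ∈ 𝒜 d → ∀ y ∈ 𝒜 e, x * y ∈ 𝒜 (d + e))
    (hpos : ∀ d : ℤ, d < 0 → 𝒜 d = ⊥)
    -- a graded projective resolution of `A_0` with `P^i` generated in degree `i`
    (Pr : ℕ → Type) [∀ i, AddCommGroup (Pr i)] [∀ i, Module K (Pr i)]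
    [∀ i, Module A (Pr i)] [∀ i, IsScalarTower K A (Pr i)]
    (hPproj : ∀ i, Module.Projective A (Pr i))
    (Pgr : ∀ i, ℤ → Submodule K (Pr i))
    (hPgr : ∀ i, DirectSum.IsInternal (Pgr i))
    (hPgrs : ∀ (i : ℕ) (d e : ℤ) (a : A), a ∈ 𝒜 d → ∀ x ∈ Pgr i e, a • x ∈ Pgr i (d + e))
    (hgen : ∀ i : ℕ, Submodule.span A ((Pgr i i : Set (Pr i))) = ⊤)
    (δ : ∀ i : ℕ, Pr (i + 1) →ₗ[A] Pr i)
    (hδgr : ∀ (i : ℕ) (d : ℤ), ∀ x ∈ Pgr (i + 1) d, δ i x ∈ Pgr i d)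
    (εm : Pr 0 →ₗ[A] (A ⧸ posIdeal K A 𝒜))
    (hεsurj : Function.Surjective εm)
    (hεgr : ∀ (d : ℤ), ∀ x ∈ Pgr 0 d, ∃ a ∈ 𝒜 d, εm x = Submodule.Quotient.mk a)
    (hexact0 : LinearMap.ker εm = LinearMap.range (δ 0))
    (hexact : ∀ i : ℕ, LinearMap.ker (δ i) = LinearMap.range (δ (i + 1))) :
    Function.Surjective
      (FreeAlgebra.lift K
        (Sum.elim (fun a : ↥(𝒜 0) => (a : A)) (fun a : ↥(𝒜 1) => (a : A)))) ∧
    TwoSidedIdeal.ker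
        (FreeAlgebra.lift K
          (Sum.elim (fun a : ↥(𝒜 0) => (a : A)) (fun a : ↥(𝒜 1) => (a : A))))
      = TwoSidedIdeal.span
          {x : FreeAlgebra K (↥(𝒜 0) ⊕ ↥(𝒜 1)) |
            x ∈ Submodule.span K
              {z : FreeAlgebra K (↥(𝒜 0) ⊕ ↥(𝒜 1)) |
                ∃ lw : List (↥(𝒜 0) ⊕ ↥(𝒜 1)),
                  lw.countP (fun g => g.isRight) ≤ 2 ∧
                  z = (lw.map (FreeAlgebra.ι K)).prod} ∧
            FreeAlgebra.lift K
              (Sum.elim (fun a : ↥(𝒜 0) => (a : A)) (fun a : ↥(𝒜 1) => (a : A))) x = 0} := by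
  let _ : GradedAlgebra 𝒜 :=
    { hA.chooseDecomposition with
      one_mem := h1
      mul_mem := fun i j _ _ hx hy => hmul i j _ hx _ hy }
  let _ (i : ℕ) : Decomposition (Pgr i) := (hPgr i).chooseDecomposition
  have (i : ℕ) : SetLike.GradedSMul 𝒜 (Pgr i) := ⟨fun d e _ _ ha hx => hPgrs i d e _ ha _ hx⟩
  have := hPproj 0
  have := hPproj 1
  obtain ⟨ε, hε, rfl⟩ := exists_graded_lift_mkQ hpos εm hεgr
  obtain ⟨u, hu, hεu⟩ := exists_mem_zero_apply_eq_one hpos hε hεsurj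
  have hgen₁ := generatedInDegreeOne_of_exact hε hu hεu (hδgr 0) (by simpa using hgen 1) hexact0
  have hsyz := syzygiesGeneratedInDegreeTwo_of_exact hgen₁ hε hu hεu (hδgr 0) (hδgr 1)
    (by simpa using hgen 2) hexact0 (hexact 0)
  exact ⟨freeLift_surjective hpos hgen₁, ker_freeLift_eq_quadraticRelations hgen₁ hsyz⟩
end
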